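/- arXiv:1601.06233 — 6 statements merged into one kernel-verified Lean document; each statement's English description precedes it below -/
import Mathlib

section
/- Strict convexity of a partial minimum with boundary: Let K > 0 and let F : (0,∞) × [0,K] → ℝ be jointly convex on (0,∞) × [0,K], such that for every x > 0 the minimum of F(x,·) over [0,K] is attained. Define G(x) := min_{0≤y≤K} F(x,y). If F is jointly strictly convex on (0,∞) × (0,K] and additionally x ↦ F(x,0) is strictly convex on (0,∞), then G is strictly convex on (0,∞). -/
open Set

/-- Mixed case: one endpoint on the boundary `y = 0`, the other with `y > 0`. -/
lemma mixed_case_aux (K : ℝ) (hK : 0 < K) (F : ℝ → ℝ → ℝ)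
    (hcvx : ConvexOn ℝ (Ioi (0 : ℝ) ×ˢ Icc (0 : ℝ) K) (fun p : ℝ × ℝ => F p.1 p.2))
    (hstrict : StrictConvexOn ℝ (Ioi (0 : ℝ) ×ˢ Ioc (0 : ℝ) K) (fun p : ℝ × ℝ => F p.1 p.2))
    {x1 x2 y2 : ℝ} (hx1 : 0 < x1) (hx2 : 0 < x2) (hy2 : y2 ∈ Ioc (0 : ℝ) K)
    (hne : x1 ≠ x2) {a b : ℝ} (ha : 0 < a) (hb : 0 < b) (hab : a + b = 1) :
    F (a * x1 + b * x2) (b * y2) < a * F x1 0 + b * F x2 y2 := by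
  set m1 : ℝ := a * x1 + b * x2 with hm1
  set m2 : ℝ := b * y2 with hm2
  have hm1pos : 0 < m1 := add_pos (mul_pos ha hx1) (mul_pos hb hx2)
  have hm2pos : 0 < m2 := mul_pos hb hy2.1
  have hm2K : m2 ≤ K := by nlinarith [hy2.1, hy2.2]
  -- midpoint of (x1,0) and (m1,m2)
  set r1 : ℝ := (x1 + m1) / 2 with hr1
  set r2 : ℝ := m2 / 2 with hr2
  have hr1pos : 0 < r1 := by simp only [hr1]; linarith
  have hr2pos : 0 < r2 := by simp only [hr2]; linarith
  have hr2K : r2 ≤ K := by simp only [hr2]; linarith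
  -- convexity: F r ≤ ½ F(x1,0) + ½ F(m1,m2)
  have hp0 : ((x1, (0:ℝ)) : ℝ × ℝ) ∈ Ioi (0 : ℝ) ×ˢ Icc (0 : ℝ) K :=
    ⟨hx1, le_refl _, hK.le⟩
  have hmmem : ((m1, m2) : ℝ × ℝ) ∈ Ioi (0 : ℝ) ×ˢ Icc (0 : ℝ) K :=
    ⟨hm1pos, hm2pos.le, hm2K⟩
  have hFr : F r1 r2 ≤ (1/2) * F x1 0 + (1/2) * F m1 m2 := by
    have h := hcvx.2 hp0 hmmem (by norm_num : (0:ℝ) < 1/2).le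
      (by norm_num : (0:ℝ) < 1/2).le (by norm_num)
    have hpt : ((1/2 : ℝ) • ((x1, (0:ℝ)) : ℝ × ℝ) + (1/2 : ℝ) • ((m1, m2) : ℝ × ℝ))
        = ((r1, r2) : ℝ × ℝ) := by
      simp [Prod.ext_iff, smul_eq_mul, hr1, hr2]; constructor <;> ring
    rw [hpt] at h
    simpa [smul_eq_mul] using h
  -- strict convexity between r and (x2, y2)
  have hrmem : ((r1, r2) : ℝ × ℝ) ∈ Ioi (0 : ℝ) ×ˢ Ioc (0 : ℝ) K :=
    ⟨hr1pos, hr2pos, hr2K⟩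
  have hqmem : ((x2, y2) : ℝ × ℝ) ∈ Ioi (0 : ℝ) ×ˢ Ioc (0 : ℝ) K := ⟨hx2, hy2⟩
  have hrq : ((r1, r2) : ℝ × ℝ) ≠ (x2, y2) := by
    intro h
    have h1 : r1 = x2 := congrArg Prod.fst h
    apply hne
    have : (1 + a) * x1 = (1 + a) * x2 := by
      have : (x1 + (a * x1 + b * x2)) / 2 = x2 := h1
      nlinarith
    have hca : (0:ℝ) < 1 + a := by linarith
    exact mul_left_cancel₀ (ne_of_gt hca) this
  have hlpos : (0:ℝ) < 2 * a / (1 + a) := by positivity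
  have hmpos : (0:ℝ) < b / (1 + a) := by positivity
  have hsum : 2 * a / (1 + a) + b / (1 + a) = 1 := by
    field_simp; linarith
  have hstr := hstrict.2 hrmem hqmem hrq hlpos hmpos hsum
  have hpt2 : ((2 * a / (1 + a) : ℝ) • ((r1, r2) : ℝ × ℝ)
      + (b / (1 + a) : ℝ) • ((x2, y2) : ℝ × ℝ)) = ((m1, m2) : ℝ × ℝ) := by
    have hca : (1 + a : ℝ) ≠ 0 := by positivity
    simp only [Prod.ext_iff, Prod.smul_mk, Prod.mk_add_mk, smul_eq_mul, hr1, hr2, hm1, hm2]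
    constructor <;> (field_simp; ring)
  rw [hpt2] at hstr
  simp only [smul_eq_mul] at hstr
  -- clear denominators and finish
  have hca : (0:ℝ) < 1 + a := by linarith
  have h2 : (1 + a) * F m1 m2 < 2 * a * F r1 r2 + b * F x2 y2 := by
    have := mul_lt_mul_of_pos_left hstr hca
    calc (1 + a) * F m1 m2 < (1 + a) * (2 * a / (1 + a) * F r1 r2 + b / (1 + a) * F x2 y2) := this
      _ = 2 * a * F r1 r2 + b * F x2 y2 := by field_simp
  nlinarith [hFr, h2]

/-- Key strictness: along segments whose endpoints differ in the first coordinate. -/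
lemma key_aux (K : ℝ) (hK : 0 < K) (F : ℝ → ℝ → ℝ)
    (hcvx : ConvexOn ℝ (Ioi (0 : ℝ) ×ˢ Icc (0 : ℝ) K) (fun p : ℝ × ℝ => F p.1 p.2))
    (hstrict : StrictConvexOn ℝ (Ioi (0 : ℝ) ×ˢ Ioc (0 : ℝ) K) (fun p : ℝ × ℝ => F p.1 p.2))
    (hstrict0 : StrictConvexOn ℝ (Ioi (0 : ℝ)) (fun x => F x 0))
    {x1 y1 x2 y2 : ℝ} (hx1 : 0 < x1) (hy1 : y1 ∈ Icc (0 : ℝ) K)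
    (hx2 : 0 < x2) (hy2 : y2 ∈ Icc (0 : ℝ) K)
    (hne : x1 ≠ x2) {a b : ℝ} (ha : 0 < a) (hb : 0 < b) (hab : a + b = 1) :
    F (a * x1 + b * x2) (a * y1 + b * y2) < a * F x1 y1 + b * F x2 y2 := by
  rcases eq_or_lt_of_le hy1.1 with h1 | h1
  · rcases eq_or_lt_of_le hy2.1 with h2 | h2
    · -- both on boundary
      subst h1; subst h2
      have := hstrict0.2 (Set.mem_Ioi.2 hx1) (Set.mem_Ioi.2 hx2) hne ha hb hab
      simpa [smul_eq_mul] using this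
    · -- y1 = 0, y2 > 0
      subst h1
      have := mixed_case_aux K hK F hcvx hstrict hx1 hx2 ⟨h2, hy2.2⟩ hne ha hb hab
      simpa using this
  · rcases eq_or_lt_of_le hy2.1 with h2 | h2
    · -- y1 > 0, y2 = 0 : swap
      subst h2
      have := mixed_case_aux K hK F hcvx hstrict hx2 hx1 ⟨h1, hy1.2⟩ (Ne.symm hne) hb ha
        (by linarith)
      have heq1 : b * x2 + a * x1 = a * x1 + b * x2 := by ring
      have heq2 : b * F x2 0 + a * F x1 y1 = a * F x1 y1 + b * F x2 0 := by ring
      rw [heq1, heq2] at this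
      simpa using this
    · -- both interior
      have hp : ((x1, y1) : ℝ × ℝ) ∈ Ioi (0 : ℝ) ×ˢ Ioc (0 : ℝ) K := ⟨hx1, h1, hy1.2⟩
      have hq : ((x2, y2) : ℝ × ℝ) ∈ Ioi (0 : ℝ) ×ˢ Ioc (0 : ℝ) K := ⟨hx2, h2, hy2.2⟩
      have hpq : ((x1, y1) : ℝ × ℝ) ≠ (x2, y2) := by
        intro h; exact hne (congrArg Prod.fst h)
      have := hstrict.2 hp hq hpq ha hb hab
      simpa [Prod.smul_mk, Prod.mk_add_mk, smul_eq_mul] using this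

/-- **Strict convexity of a partial minimum with boundary** -/
theorem partial_min_boundary_strictConvexOn
    (K : ℝ) (hK : 0 < K) (F : ℝ → ℝ → ℝ)
    (hcvx : ConvexOn ℝ (Ioi (0 : ℝ) ×ˢ Icc (0 : ℝ) K) (fun p : ℝ × ℝ => F p.1 p.2))
    (hattain : ∀ x : ℝ, 0 < x →
      ∃ y ∈ Icc (0 : ℝ) K, IsLeast ((fun y' => F x y') '' Icc (0 : ℝ) K) (F x y))
    (hstrict : StrictConvexOn ℝ (Ioi (0 : ℝ) ×ˢ Ioc (0 : ℝ) K) (fun p : ℝ × ℝ => F p.1 p.2))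
    (hstrict0 : StrictConvexOn ℝ (Ioi (0 : ℝ)) (fun x => F x 0)) :
    StrictConvexOn ℝ (Ioi (0 : ℝ)) (fun x => sInf ((fun y' => F x y') '' Icc (0 : ℝ) K)) := by
  refine ⟨convex_Ioi 0, ?_⟩
  intro x hx y hy hxy a b ha hb hab
  simp only [smul_eq_mul]
  have hx' : (0:ℝ) < x := hx
  have hy' : (0:ℝ) < y := hy
  obtain ⟨ya, hya, hla⟩ := hattain x hx'
  obtain ⟨yb, hyb, hlb⟩ := hattain y hy'
  have hz : (0:ℝ) < a * x + b * y := by positivity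
  obtain ⟨yc, hyc, hlc⟩ := hattain (a * x + b * y) hz
  have hGx : sInf ((fun y' => F x y') '' Icc (0 : ℝ) K) = F x ya := hla.csInf_eq
  have hGy : sInf ((fun y' => F y y') '' Icc (0 : ℝ) K) = F y yb := hlb.csInf_eq
  have hGz : sInf ((fun y' => F (a * x + b * y) y') '' Icc (0 : ℝ) K)
      = F (a * x + b * y) yc := hlc.csInf_eq
  rw [hGx, hGy, hGz]
  have hymem : a * ya + b * yb ∈ Icc (0 : ℝ) K := by
    have := (convex_Icc (0:ℝ) K) hya hyb ha.le hb.le hab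
    simpa [smul_eq_mul] using this
  have hle : F (a * x + b * y) yc ≤ F (a * x + b * y) (a * ya + b * yb) :=
    hlc.2 ⟨a * ya + b * yb, hymem, rfl⟩
  have hkey : F (a * x + b * y) (a * ya + b * yb) < a * F x ya + b * F y yb :=
    key_aux K hK F hcvx hstrict hstrict0 hx' hya hy' hyb hxy ha hb hab
  linarith
end

section
/- A joint monotonicity inequality for Moreau envelope gradients: Let ℓ : ℝ → ℝ be convex, and for a ∈ ℝ, b > 0 define E₁(a, b) := (a − prox_ℓ(a; b))/b and E₂(a, b) := − (a − prox_ℓ(a; b))²/(2b²). Fix χ ∈ ℝ and τ > 0. Then for every x ∈ ℝ and every y > −τ, ( E₁(χ+x, τ+y) − E₁(χ, τ) )·x + ( E₂(χ+x, τ+y) − E₂(χ, τ) )·y ≥ (τ + y/2) · ( E₁(χ+x, τ+y) − E₁(χ, τ) )². -/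
open Set

/-- If `b ≤ a + t*c` for all small positive `t`, then `b ≤ a`. -/
lemma aux_small_t {a b c : ℝ} (hc : 0 ≤ c)
    (h : ∀ t : ℝ, 0 < t → t ≤ 1 → b ≤ a + t * c) : b ≤ a := by
  by_contra hab
  push_neg at hab
  set t : ℝ := min 1 ((b - a) / (2 * (c + 1))) with ht
  have hba : 0 < b - a := by linarith
  have hc1 : 0 < c + 1 := by linarith
  have ht0 : 0 < t := lt_min one_pos (by positivity)
  have ht1 : t ≤ 1 := min_le_left _ _
  have h2 : t ≤ (b - a) / (2 * (c + 1)) := min_le_right _ _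
  have h3 : b ≤ a + t * c := h t ht0 ht1
  have h4 : t * c < b - a := by
    calc t * c ≤ (b - a) / (2 * (c + 1)) * c := by
          apply mul_le_mul_of_nonneg_right h2 hc
      _ < b - a := by
          rw [div_mul_eq_mul_div, div_lt_iff₀ (by positivity)]
          nlinarith
  linarith

/-- Subgradient inequality for the prox point. -/
lemma prox_subgrad (ℓ : ℝ → ℝ) (hℓ : ConvexOn ℝ Set.univ ℓ)
    (a b : ℝ) (hb : 0 < b) (p : ℝ)
    (hp : ∀ v : ℝ, v ≠ p →
      (a - p) ^ 2 / (2 * b) + ℓ p < (a - v) ^ 2 / (2 * b) + ℓ v)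
    (v : ℝ) : (a - p) / b * (v - p) ≤ ℓ v - ℓ p := by
  have hb0 : b ≠ 0 := ne_of_gt hb
  have hb2 : (0:ℝ) < 2 * b := by linarith
  rcases eq_or_ne v p with rfl | hvp
  · simp
  · apply aux_small_t (c := (v - p) ^ 2 / (2 * b)) (by positivity)
    intro t ht0 ht1
    set vt : ℝ := p + t * (v - p) with hvt
    have hvtne : vt ≠ p := by
      simp only [hvt]
      intro h
      apply hvp
      have h' : t * (v - p) = 0 := by linarith
      rcases mul_eq_zero.1 h' with h1 | h1
      · linarith
      · linarith
    have h1 : (a - p) ^ 2 / (2 * b) + ℓ p ≤ (a - vt) ^ 2 / (2 * b) + ℓ vt :=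
      (hp vt hvtne).le
    have h2 : ℓ vt ≤ (1 - t) * ℓ p + t * ℓ v := by
      have h := hℓ.2 (mem_univ p) (mem_univ v) (by linarith : (0:ℝ) ≤ 1 - t)
        ht0.le (by ring)
      have hvt' : (1 - t) • p + t • v = vt := by
        simp only [smul_eq_mul, hvt]; ring
      rw [hvt'] at h
      simpa [smul_eq_mul] using h
    -- multiply h1 by 2b to clear denominators
    have h1' : (a - p) ^ 2 + ℓ p * (2 * b) ≤ (a - vt) ^ 2 + ℓ vt * (2 * b) := by
      have := mul_le_mul_of_nonneg_right h1 hb2.le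
      calc (a - p) ^ 2 + ℓ p * (2 * b)
          = ((a - p) ^ 2 / (2 * b) + ℓ p) * (2 * b) := by field_simp
        _ ≤ ((a - vt) ^ 2 / (2 * b) + ℓ vt) * (2 * b) := this
        _ = (a - vt) ^ 2 + ℓ vt * (2 * b) := by field_simp
    have hexp : (a - vt) ^ 2 = (a - p) ^ 2 - 2 * t * (v - p) * (a - p)
        + t ^ 2 * (v - p) ^ 2 := by
      simp only [hvt]; ring
    rw [hexp] at h1'
    have h3 : t * (2 * (v - p) * (a - p)) ≤
        t * (t * (v - p) ^ 2 + (ℓ v - ℓ p) * (2 * b)) := by nlinarith [h1', h2]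
    have h4 : 2 * (v - p) * (a - p) ≤ t * (v - p) ^ 2 + (ℓ v - ℓ p) * (2 * b) :=
      (mul_le_mul_iff_right₀ ht0).1 h3
    -- divide by 2b
    rw [div_mul_eq_mul_div, div_le_iff₀ hb]
    have hgoal : (ℓ v - ℓ p + t * ((v - p) ^ 2 / (2 * b))) * b
        = (t * (v - p) ^ 2 + (ℓ v - ℓ p) * (2 * b)) / 2 := by
      field_simp; ring
    rw [hgoal]
    linarith [h4]

/-- **A joint monotonicity inequality for Moreau envelope gradients**: with
`E₁(a,b) = (a − prox_ℓ(a;b))/b` and `E₂(a,b) = −(a − prox_ℓ(a;b))²/(2b²)`, for every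
`χ ∈ ℝ`, `τ > 0`, `x ∈ ℝ`, `y > −τ`:
`(E₁(χ+x,τ+y) − E₁(χ,τ))·x + (E₂(χ+x,τ+y) − E₂(χ,τ))·y
  ≥ (τ + y/2)·(E₁(χ+x,τ+y) − E₁(χ,τ))²`. -/
theorem moreau_gradient_monotonicity
    (ℓ : ℝ → ℝ) (hℓ : ConvexOn ℝ Set.univ ℓ)
    (P : ℝ → ℝ → ℝ)
    (hP : ∀ (a b : ℝ), 0 < b → ∀ v : ℝ, v ≠ P a b →
      (a - P a b) ^ 2 / (2 * b) + ℓ (P a b) < (a - v) ^ 2 / (2 * b) + ℓ v)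
    (E₁ E₂ : ℝ → ℝ → ℝ)
    (hE₁ : ∀ a b : ℝ, E₁ a b = (a - P a b) / b)
    (hE₂ : ∀ a b : ℝ, E₂ a b = -(a - P a b) ^ 2 / (2 * b ^ 2))
    (χ τ : ℝ) (hτ : 0 < τ) (x y : ℝ) (hy : -τ < y) :
    (τ + y / 2) * (E₁ (χ + x) (τ + y) - E₁ χ τ) ^ 2 ≤
      (E₁ (χ + x) (τ + y) - E₁ χ τ) * x + (E₂ (χ + x) (τ + y) - E₂ χ τ) * y := by
  have hσ : 0 < τ + y := by linarith
  have hτ0 : τ ≠ 0 := ne_of_gt hτ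
  have hσ0 : τ + y ≠ 0 := ne_of_gt hσ
  set p : ℝ := P χ τ with hp
  set q : ℝ := P (χ + x) (τ + y) with hq
  set u : ℝ := (χ - p) / τ with hu
  set w : ℝ := (χ + x - q) / (τ + y) with hw
  have hpu : χ - p = τ * u := by rw [hu]; field_simp
  have hqw : χ + x - q = (τ + y) * w := by rw [hw]; field_simp
  have h1 : u * (q - p) ≤ ℓ q - ℓ p :=
    prox_subgrad ℓ hℓ χ τ hτ p (hP χ τ hτ) q
  have h2 : w * (p - q) ≤ ℓ p - ℓ q :=
    prox_subgrad ℓ hℓ (χ + x) (τ + y) hσ q (hP (χ + x) (τ + y) hσ) p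
  have key : 0 ≤ (q - p) * (w - u) := by nlinarith [h1, h2]
  have hE1a : E₁ (χ + x) (τ + y) = w := by rw [hE₁]
  have hE1b : E₁ χ τ = u := by rw [hE₁]
  have hE2a : E₂ (χ + x) (τ + y) = -w ^ 2 / 2 := by
    rw [hE₂, ← hq, hqw]
    field_simp
  have hE2b : E₂ χ τ = -u ^ 2 / 2 := by
    rw [hE₂, ← hp, hpu]
    field_simp
  rw [hE1a, hE1b, hE2a, hE2b]
  have hx : x = (q - p) + (τ + y) * w - τ * u := by
    have h : q - p = (χ + x - (τ + y) * w) - (χ - τ * u) := by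
      rw [← hqw, ← hpu]; ring
    linarith [h]
  have hid : (w - u) * x + (-w ^ 2 / 2 - -u ^ 2 / 2) * y
      - (τ + y / 2) * (w - u) ^ 2 = (q - p) * (w - u) := by
    rw [hx]; ring
  linarith [key, hid]
end

section
/- Joint strict convexity of the Expected Moreau Envelope: Assume (A), assume Z is not almost surely constant, and assume that either (i) there exists a point of ℝ at which ℓ is not differentiable, or (ii) there exists a nonempty open interval on which ℓ is differentiable with strictly increasing derivative. Then the Expected Moreau Envelope L(α, τ) = E[ e_ℓ(αG + Z; τ) − ℓ(Z) ] is jointly strictly convex on (0,∞) × (0,∞). -/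
open MeasureTheory ProbabilityTheory Set Real

/-- The subdifferential of `ℓ : ℝ → ℝ` at `x`. -/
def subdiff (ℓ : ℝ → ℝ) (x : ℝ) : Set ℝ := {s : ℝ | ∀ y : ℝ, ℓ x + s * (y - x) ≤ ℓ y}

/-- `ℓ'₊(v) = max_{s∈∂ℓ(v)} |s|`. -/
noncomputable def maxAbsSubgrad (ℓ : ℝ → ℝ) (v : ℝ) : ℝ := sSup (abs '' subdiff ℓ v)


namespace MEaux





variable {ℓ : ℝ → ℝ}

/-- left slope sup -/
noncomputable def lsl (ℓ : ℝ → ℝ) (x : ℝ) : ℝ := sSup (slope ℓ x '' Iio x)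

noncomputable def rsi (ℓ : ℝ → ℝ) (x : ℝ) : ℝ := sInf (slope ℓ x '' Ioi x)

lemma slope_mono_univ (hℓ : ConvexOn ℝ Set.univ ℓ) (x : ℝ) {y z : ℝ} (hy : y ≠ x) (hz : z ≠ x)
    (hyz : y ≤ z) : slope ℓ x y ≤ slope ℓ x z :=
  hℓ.slope_mono (mem_univ x) ⟨mem_univ y, hy⟩ ⟨mem_univ z, hz⟩ hyz

lemma bddAbove_left_slopes (hℓ : ConvexOn ℝ Set.univ ℓ) (x : ℝ) :
    BddAbove (slope ℓ x '' Iio x) := by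
  refine ⟨slope ℓ x (x + 1), ?_⟩
  rintro t ⟨y, hy, rfl⟩
  exact slope_mono_univ hℓ x (ne_of_lt hy) (by norm_num) (by linarith [mem_Iio.mp hy])

lemma bddBelow_right_slopes (hℓ : ConvexOn ℝ Set.univ ℓ) (x : ℝ) :
    BddBelow (slope ℓ x '' Ioi x) := by
  refine ⟨slope ℓ x (x - 1), ?_⟩
  rintro t ⟨y, hy, rfl⟩
  exact slope_mono_univ hℓ x (by norm_num) (ne_of_gt hy) (by linarith [mem_Ioi.mp hy])

lemma lsl_mem_subdiff (hℓ : ConvexOn ℝ Set.univ ℓ) (x : ℝ) : lsl ℓ x ∈ subdiff ℓ x := by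
  intro y
  rcases lt_trichotomy y x with h | h | h
  · -- y < x : slope ℓ x y ≤ lsl
    have hle : slope ℓ x y ≤ lsl ℓ x :=
      le_csSup (bddAbove_left_slopes hℓ x) (mem_image_of_mem _ (mem_Iio.mpr h))
    rw [slope_def_field, div_le_iff_of_neg (by linarith : y - x < 0)] at hle
    linarith [hle]
  · simp [h]
  · -- x < y : lsl ≤ slope ℓ x y
    have hle : lsl ℓ x ≤ slope ℓ x y := by
      apply csSup_le (Set.Nonempty.image _ ⟨x - 1, by simp⟩)
      rintro t ⟨w, hw, rfl⟩
      exact slope_mono_univ hℓ x (ne_of_lt hw) (ne_of_gt h) (by linarith [mem_Iio.mp hw])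
    rw [slope_def_field, le_div_iff₀ (by linarith : (0:ℝ) < y - x)] at hle
    linarith [hle]

lemma rsi_mem_subdiff (hℓ : ConvexOn ℝ Set.univ ℓ) (x : ℝ) : rsi ℓ x ∈ subdiff ℓ x := by
  intro y
  rcases lt_trichotomy y x with h | h | h
  · have hle : slope ℓ x y ≤ rsi ℓ x := by
      apply le_csInf (Set.Nonempty.image _ ⟨x + 1, by simp⟩)
      rintro t ⟨w, hw, rfl⟩
      exact slope_mono_univ hℓ x (ne_of_lt h) (ne_of_gt hw) (by linarith [mem_Ioi.mp hw])
    rw [slope_def_field, div_le_iff_of_neg (by linarith : y - x < 0)] at hle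
    linarith [hle]
  · simp [h]
  · have hle : rsi ℓ x ≤ slope ℓ x y :=
      csInf_le (bddBelow_right_slopes hℓ x) (mem_image_of_mem _ (mem_Ioi.mpr h))
    rw [slope_def_field, le_div_iff₀ (by linarith : (0:ℝ) < y - x)] at hle
    linarith [hle]

lemma subdiff_nonempty (hℓ : ConvexOn ℝ Set.univ ℓ) (x : ℝ) : (subdiff ℓ x).Nonempty :=
  ⟨lsl ℓ x, lsl_mem_subdiff hℓ x⟩

lemma abs_le_maxAbsSubgrad (hℓ : ConvexOn ℝ Set.univ ℓ) {x s : ℝ} (hs : s ∈ subdiff ℓ x) :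
    |s| ≤ maxAbsSubgrad ℓ x := by
  have hbdd : BddAbove (abs '' subdiff ℓ x) := by
    refine ⟨max (ℓ (x + 1) - ℓ x) (ℓ (x - 1) - ℓ x), ?_⟩
    rintro t ⟨u, hu, rfl⟩
    have h1 := hu (x + 1)
    have h2 := hu (x - 1)
    simp only [add_sub_cancel_left] at h1
    have h2' : ℓ x + u * (-1) ≤ ℓ (x - 1) := by simpa using h2
    rcases abs_cases u with ⟨h, _⟩ | ⟨h, _⟩
    · rw [h]; exact le_max_of_le_left (by linarith)
    · rw [h]; exact le_max_of_le_right (by linarith)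
  exact le_csSup hbdd (mem_image_of_mem _ hs)

lemma maxAbsSubgrad_nonneg (hℓ : ConvexOn ℝ Set.univ ℓ) (x : ℝ) : 0 ≤ maxAbsSubgrad ℓ x :=
  le_trans (abs_nonneg _) (abs_le_maxAbsSubgrad hℓ (lsl_mem_subdiff hℓ x))

/-- monotonicity of the subdifferential -/
lemma subdiff_mono {u v s t : ℝ} (hs : s ∈ subdiff ℓ u) (ht : t ∈ subdiff ℓ v) :
    0 ≤ (s - t) * (u - v) := by
  have h1 := hs v
  have h2 := ht u
  nlinarith

variable {ℓ : ℝ → ℝ}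



lemma lsl_le_rsi (hℓ : ConvexOn ℝ Set.univ ℓ) (x : ℝ) : lsl ℓ x ≤ rsi ℓ x := by
  apply csSup_le (Set.Nonempty.image _ ⟨x - 1, by simp⟩)
  rintro t ⟨y, hy, rfl⟩
  apply le_csInf (Set.Nonempty.image _ ⟨x + 1, by simp⟩)
  rintro u ⟨w, hw, rfl⟩
  exact slope_mono_univ hℓ x (ne_of_lt hy) (ne_of_gt hw)
    (by linarith [mem_Iio.mp hy, mem_Ioi.mp hw])

lemma hasDerivAt_of_lsl_eq_rsi (hℓ : ConvexOn ℝ Set.univ ℓ) {x : ℝ} (h : lsl ℓ x = rsi ℓ x) :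
    HasDerivAt ℓ (lsl ℓ x) x := by
  rw [hasDerivAt_iff_tendsto_slope]
  rw [← nhdsLT_sup_nhdsGT x, Filter.tendsto_sup]
  constructor
  · have hm : MonotoneOn (slope ℓ x) (Iio x) := fun y hy z hz hyz =>
      slope_mono_univ hℓ x (ne_of_lt hy) (ne_of_lt hz) hyz
    exact hm.tendsto_nhdsLT (bddAbove_left_slopes hℓ x)
  · have hm : MonotoneOn (slope ℓ x) (Ioi x) := fun y hy z hz hyz =>
      slope_mono_univ hℓ x (ne_of_gt hy) (ne_of_gt hz) hyz
    rw [h]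
    exact hm.tendsto_nhdsGT (bddBelow_right_slopes hℓ x)

lemma lsl_lt_rsi_of_not_differentiable (hℓ : ConvexOn ℝ Set.univ ℓ) {x : ℝ}
    (h : ¬ DifferentiableAt ℝ ℓ x) : lsl ℓ x < rsi ℓ x := by
  rcases lt_or_eq_of_le (lsl_le_rsi hℓ x) with h' | h'
  · exact h'
  · exact absurd (hasDerivAt_of_lsl_eq_rsi hℓ h').differentiableAt h

lemma deriv_mem_subdiff (hℓ : ConvexOn ℝ Set.univ ℓ) {x : ℝ} (hd : DifferentiableAt ℝ ℓ x) :
    deriv ℓ x ∈ subdiff ℓ x := by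
  intro y
  rcases lt_trichotomy y x with h | h | h
  · have := hℓ.slope_le_deriv (mem_univ y) (mem_univ x) h hd
    rw [slope_def_field, div_le_iff₀ (by linarith : (0:ℝ) < x - y)] at this
    linarith
  · simp [h]
  · have := hℓ.deriv_le_slope (mem_univ x) (mem_univ y) h hd
    rw [slope_def_field, le_div_iff₀ (by linarith : (0:ℝ) < y - x)] at this
    linarith

lemma affine_on_segment (hℓ : ConvexOn ℝ Set.univ ℓ) {u w s : ℝ} (hs : s ∈ subdiff ℓ u)
    (hw : ℓ w = ℓ u + s * (w - u)) {t : ℝ} (ht : t ∈ segment ℝ u w) :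
    ℓ t = ℓ u + s * (t - u) := by
  obtain ⟨a, b, ha, hb, hab, rfl⟩ := ht
  have hle : ℓ (a • u + b • w) ≤ a * ℓ u + b * ℓ w :=
    hℓ.2 (mem_univ u) (mem_univ w) ha hb hab
  have hge := hs (a • u + b • w)
  simp only [smul_eq_mul] at *
  have h1 : a * ℓ u + b * ℓ w = ℓ u + s * (a * u + b * w - u) := by
    have hab' : a = 1 - b := by linarith
    subst hab'; rw [hw]; ring
  linarith [hge, hle]

section Prox
variable {ℓ : ℝ → ℝ} {P : ℝ → ℝ → ℝ}
variable (hℓ : ConvexOn ℝ Set.univ ℓ)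
variable (hP : ∀ (a b : ℝ), 0 < b → ∀ v : ℝ, v ≠ P a b →
      (a - P a b) ^ 2 / (2 * b) + ℓ (P a b) < (a - v) ^ 2 / (2 * b) + ℓ v)

include hP in
lemma prox_le {a τ : ℝ} (hτ : 0 < τ) (v : ℝ) :
    (a - P a τ) ^ 2 / (2 * τ) + ℓ (P a τ) ≤ (a - v) ^ 2 / (2 * τ) + ℓ v := by
  rcases eq_or_ne v (P a τ) with rfl | h
  · exact le_refl _
  · exact (hP a τ hτ v h).le

include hℓ hP in
lemma prox_subgrad {a τ : ℝ} (hτ : 0 < τ) : (a - P a τ) / τ ∈ subdiff ℓ (P a τ) := by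
  intro y
  set v := P a τ with hv
  rcases eq_or_ne y v with rfl | hy
  · simp
  have key : ∀ t : ℝ, 0 < t → t ≤ 1 →
      ℓ v + (a - v) / τ * (y - v) ≤ ℓ y + t * ((y - v) ^ 2 / (2 * τ)) := by
    intro t ht ht1
    have hcomb : ℓ ((1 - t) * v + t * y) ≤ (1 - t) * ℓ v + t * ℓ y := by
      have := hℓ.2 (mem_univ v) (mem_univ y) (by linarith : (0:ℝ) ≤ 1 - t) ht.le (by ring)
      simpa using this
    have hopt := prox_le hP (a := a) hτ ((1 - t) * v + t * y)
    rw [← hv] at hopt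
    have expand : (a - ((1 - t) * v + t * y)) ^ 2 / (2 * τ)
        = (a - v) ^ 2 / (2 * τ) - t * ((a - v) / τ * (y - v)) + t * (t * ((y - v) ^ 2 / (2 * τ))) := by
      field_simp
      ring
    have H2 : t * (ℓ v + (a - v) / τ * (y - v)) ≤ t * (ℓ y + t * ((y - v) ^ 2 / (2 * τ))) := by
      nlinarith [hopt, hcomb, expand]
    exact le_of_mul_le_mul_left H2 ht
  refine le_of_forall_pos_le_add fun ε hε => ?_
  have hc : 0 ≤ (y - v) ^ 2 / (2 * τ) := by positivity
  set c := (y - v) ^ 2 / (2 * τ) with hcdef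
  have htpos : 0 < min 1 (ε / (c + 1)) := lt_min one_pos (by positivity)
  have := key _ htpos (min_le_left _ _)
  have htc : min 1 (ε / (c + 1)) * c ≤ ε := by
    have h1 : min 1 (ε / (c + 1)) ≤ ε / (c + 1) := min_le_right _ _
    have h2 : min 1 (ε / (c + 1)) * c ≤ ε / (c + 1) * c :=
      mul_le_mul_of_nonneg_right h1 hc
    have h3 : ε / (c + 1) * c ≤ ε := by
      rw [div_mul_eq_mul_div, div_le_iff₀ (by linarith : (0:ℝ) < c + 1)]
      nlinarith
    linarith
  linarith

include hℓ hP in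
lemma prox_eq_of_subgrad {v₀ s₀ τ : ℝ} (hτ : 0 < τ) (hs : s₀ ∈ subdiff ℓ v₀) :
    P (v₀ + τ * s₀) τ = v₀ := by
  by_contra h
  set a := v₀ + τ * s₀ with ha
  set y := P a τ with hy
  have hstrict := hP a τ hτ v₀ (Ne.symm h)
  have hsy := hs y
  have expand : (a - y) ^ 2 / (2 * τ)
      = τ * s₀ ^ 2 / 2 - s₀ * (y - v₀) + (y - v₀) ^ 2 / (2 * τ) := by
    rw [ha]; field_simp; ring
  have h0 : (0:ℝ) ≤ (y - v₀) ^ 2 / (2 * τ) := by positivity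
  have hav : (a - v₀) ^ 2 / (2 * τ) = τ * s₀ ^ 2 / 2 := by rw [ha]; field_simp; ring
  nlinarith [hstrict, hsy]

include hℓ hP in
lemma prox_contract {χ χ' τ : ℝ} (hτ : 0 < τ) :
    (P χ τ - P χ' τ) ^ 2 ≤ (χ - χ') * (P χ τ - P χ' τ) := by
  have := subdiff_mono (prox_subgrad hℓ hP hτ (a := χ)) (prox_subgrad hℓ hP hτ (a := χ'))
  have e : (χ - P χ τ) / τ - (χ' - P χ' τ) / τ = ((χ - P χ τ) - (χ' - P χ' τ)) / τ :=
    (sub_div _ _ _).symm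
  rw [e, div_mul_eq_mul_div, le_div_iff₀ hτ] at this
  nlinarith [this]

include hℓ hP in
lemma prox_diff_bounds {χ χ' τ : ℝ} (hτ : 0 < τ) (h : χ ≤ χ') :
    0 ≤ P χ' τ - P χ τ ∧ P χ' τ - P χ τ ≤ χ' - χ := by
  have hc := prox_contract hℓ hP (χ := χ') (χ' := χ) hτ
  constructor <;> nlinarith [hc, sq_nonneg (P χ' τ - P χ τ)]

include hℓ hP in
lemma ffun_lipschitz (τ : ℝ) (hτ : 0 < τ) :
    LipschitzWith 1 (fun χ : ℝ => χ - P χ τ) := by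
  apply LipschitzWith.of_dist_le_mul
  intro x y
  simp only [Real.dist_eq, NNReal.coe_one, one_mul]
  rcases le_total x y with h | h
  · obtain ⟨h1, h2⟩ := prox_diff_bounds hℓ hP hτ h
    rw [abs_sub_comm (x - P x τ), abs_sub_comm x y]
    rw [abs_of_nonneg (by linarith), abs_of_nonneg (by linarith)]
    linarith
  · obtain ⟨h1, h2⟩ := prox_diff_bounds hℓ hP hτ h
    rw [abs_of_nonneg (by linarith), abs_of_nonneg (by linarith)]
    linarith

include hℓ hP in
lemma ffun_mono {τ : ℝ} (hτ : 0 < τ) {χ χ' : ℝ} (h : χ ≤ χ') :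
    χ - P χ τ ≤ χ' - P χ' τ := by
  obtain ⟨h1, h2⟩ := prox_diff_bounds hℓ hP hτ h
  linarith

end Prox

lemma persp_identity {t₁ t₂ θ : ℝ} (h1 : 0 < t₁) (h2 : 0 < t₂) (hθ0 : 0 ≤ θ) (hθ1 : θ ≤ 1)
    (x₁ x₂ : ℝ) :
    θ * (x₁ ^ 2 / (2 * t₁)) + (1 - θ) * (x₂ ^ 2 / (2 * t₂))
      = (θ * x₁ + (1 - θ) * x₂) ^ 2 / (2 * (θ * t₁ + (1 - θ) * t₂))
        + θ * (1 - θ) * (x₁ * t₂ - x₂ * t₁) ^ 2 / (2 * t₁ * t₂ * (θ * t₁ + (1 - θ) * t₂)) := by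
  have hT : 0 < θ * t₁ + (1 - θ) * t₂ := by
    rcases eq_or_lt_of_le hθ0 with h | h
    · simpa [← h] using h2
    · nlinarith [mul_pos h h1, mul_nonneg (by linarith : (0:ℝ) ≤ 1 - θ) h2.le]
  field_simp
  ring

lemma periodic_mono_aux {f : ℝ → ℝ} {δ : ℝ} (hper : ∀ w, f (w + δ) = f w) (w : ℝ) :
    ∀ n : ℕ, f (w + n * δ) = f w := by
  intro n
  induction n with
  | zero => simp
  | succ n ih =>
    have : w + (n + 1 : ℕ) * δ = (w + n * δ) + δ := by push_cast; ring
    rw [this, hper, ih]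

lemma const_of_monotone_periodic {f : ℝ → ℝ} (hf : Monotone f) {δ : ℝ} (hδ : δ ≠ 0)
    (hper : ∀ w, f (w + δ) = f w) : ∀ u u' : ℝ, f u = f u' := by
  have main : ∀ {ε : ℝ}, 0 < ε → (∀ w, f (w + ε) = f w) → ∀ u u' : ℝ, u ≤ u' → f u = f u' := by
    intro ε hε hp u u' huu
    obtain ⟨n, hn⟩ := exists_nat_ge ((u' - u) / ε)
    have hnn : u' ≤ u + n * ε := by
      rw [div_le_iff₀ hε] at hn
      linarith
    have h1 : f u ≤ f u' := hf huu
    have h2 : f u' ≤ f (u + n * ε) := hf hnn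
    rw [periodic_mono_aux hp u n] at h2
    linarith
  rcases hδ.lt_or_gt with h | h
  · have hper' : ∀ w, f (w + -δ) = f w := by
      intro w
      have := hper (w - δ)
      simpa [sub_add_cancel, ← sub_eq_add_neg] using this.symm
    intro u u'
    rcases le_total u u' with hle | hle
    · exact main (by linarith) hper' u u' hle
    · exact (main (by linarith) hper' u' u hle).symm
  · intro u u'
    rcases le_total u u' with hle | hle
    · exact main h hper u u' hle
    · exact (main h hper u' u hle).symm

lemma integrable_sq_gaussian : Integrable (fun x : ℝ => x ^ 2) (gaussianReal 0 1) := by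
  rw [gaussianReal_of_var_ne_zero 0 one_ne_zero,
    integrable_withDensity_iff (measurable_gaussianPDF 0 1)
      (Filter.Eventually.of_forall fun x => ENNReal.ofReal_lt_top)]
  have hbound : ∀ x : ℝ, ‖x ^ 2 * (gaussianPDF 0 1 x).toReal‖
      ≤ (Real.sqrt (2 * π))⁻¹ * 4 * Real.exp (-((1:ℝ)/4) * x ^ 2) := by
    intro x
    have hpdf : (gaussianPDF 0 1 x).toReal = gaussianPDFReal 0 1 x :=
      ENNReal.toReal_ofReal (gaussianPDFReal_nonneg 0 1 x)
    rw [hpdf]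
    have hpdf2 : gaussianPDFReal 0 1 x = (Real.sqrt (2 * π))⁻¹ * Real.exp (-(x ^ 2) / 2) := by
      simp [gaussianPDFReal]
    rw [hpdf2]
    have hx4 : x ^ 2 * Real.exp (-(x ^ 2 / 4)) ≤ 4 := by
      have h := Real.add_one_le_exp (x ^ 2 / 4)
      have hexp : 0 < Real.exp (-(x ^ 2 / 4)) := Real.exp_pos _
      have hmul : Real.exp (x ^ 2 / 4) * Real.exp (-(x ^ 2 / 4)) = 1 := by
        rw [← Real.exp_add]; simp
      nlinarith [sq_nonneg x]
    have hsplit : Real.exp (-(x ^ 2) / 2)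
        = Real.exp (-(x ^ 2 / 4)) * Real.exp (-((1:ℝ)/4) * x ^ 2) := by
      rw [← Real.exp_add]
      ring_nf
    rw [Real.norm_eq_abs, abs_of_nonneg (by positivity), hsplit]
    have hexp2 : 0 ≤ Real.exp (-((1:ℝ)/4) * x ^ 2) := (Real.exp_pos _).le
    calc x ^ 2 * ((Real.sqrt (2 * π))⁻¹ * (Real.exp (-(x ^ 2 / 4)) * Real.exp (-((1:ℝ)/4) * x ^ 2)))
        = (Real.sqrt (2 * π))⁻¹ * ((x ^ 2 * Real.exp (-(x ^ 2 / 4))) * Real.exp (-((1:ℝ)/4) * x ^ 2)) := by ring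
      _ ≤ (Real.sqrt (2 * π))⁻¹ * (4 * Real.exp (-((1:ℝ)/4) * x ^ 2)) := by
          apply mul_le_mul_of_nonneg_left _ (by positivity)
          exact mul_le_mul_of_nonneg_right hx4 hexp2
      _ = (Real.sqrt (2 * π))⁻¹ * 4 * Real.exp (-((1:ℝ)/4) * x ^ 2) := by ring
  refine Integrable.mono' (((integrable_exp_neg_mul_sq (by norm_num : (0:ℝ) < 1/4)).const_mul
    ((Real.sqrt (2 * π))⁻¹ * 4))) ?_ (Filter.Eventually.of_forall hbound)
  exact ((continuous_pow 2).aestronglyMeasurable).mul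
    (measurable_gaussianPDF 0 1).ennreal_toReal.aestronglyMeasurable


-- appended section: key inequality and integrability
section Main
variable {ℓ : ℝ → ℝ} {P : ℝ → ℝ → ℝ}
variable (hℓ : ConvexOn ℝ Set.univ ℓ)
variable (hP : ∀ (a b : ℝ), 0 < b → ∀ v : ℝ, v ≠ P a b →
      (a - P a b) ^ 2 / (2 * b) + ℓ (P a b) < (a - v) ^ 2 / (2 * b) + ℓ v)
variable {e : ℝ → ℝ → ℝ}
variable (he : ∀ χ τ : ℝ, e χ τ = (χ - P χ τ) ^ 2 / (2 * τ) + ℓ (P χ τ))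

include hℓ hP he in
lemma key_ineq {τ₁ τ₂ θ : ℝ} (h1 : 0 < τ₁) (h2 : 0 < τ₂) (hθ0 : 0 ≤ θ) (hθ1 : θ ≤ 1)
    (χ₁ χ₂ : ℝ) :
    e (θ * χ₁ + (1 - θ) * χ₂) (θ * τ₁ + (1 - θ) * τ₂)
      + θ * (1 - θ) * ((χ₁ - P χ₁ τ₁) * τ₂ - (χ₂ - P χ₂ τ₂) * τ₁) ^ 2
          / (2 * τ₁ * τ₂ * (θ * τ₁ + (1 - θ) * τ₂))
    ≤ θ * e χ₁ τ₁ + (1 - θ) * e χ₂ τ₂ := by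
  have hT : 0 < θ * τ₁ + (1 - θ) * τ₂ := by
    rcases eq_or_lt_of_le hθ0 with h | h
    · simpa [← h] using h2
    · nlinarith [mul_pos h h1, mul_nonneg (by linarith : (0:ℝ) ≤ 1 - θ) h2.le]
  set v₁ := P χ₁ τ₁
  set v₂ := P χ₂ τ₂
  set x₁ := χ₁ - v₁ with hx₁
  set x₂ := χ₂ - v₂ with hx₂
  set v := θ * v₁ + (1 - θ) * v₂ with hvdef
  have h0 : e (θ * χ₁ + (1 - θ) * χ₂) (θ * τ₁ + (1 - θ) * τ₂)
      ≤ (θ * χ₁ + (1 - θ) * χ₂ - v) ^ 2 / (2 * (θ * τ₁ + (1 - θ) * τ₂)) + ℓ v := by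
    rw [he]
    exact prox_le hP hT v
  have hχv : θ * χ₁ + (1 - θ) * χ₂ - v = θ * x₁ + (1 - θ) * x₂ := by
    rw [hvdef, hx₁, hx₂]; ring
  have hconv : ℓ v ≤ θ * ℓ v₁ + (1 - θ) * ℓ v₂ := by
    have := hℓ.2 (mem_univ v₁) (mem_univ v₂) hθ0 (by linarith : (0:ℝ) ≤ 1 - θ) (by ring)
    simpa using this
  have hpersp := persp_identity h1 h2 hθ0 hθ1 x₁ x₂
  have he₁ : e χ₁ τ₁ = x₁ ^ 2 / (2 * τ₁) + ℓ v₁ := he χ₁ τ₁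
  have he₂ : e χ₂ τ₂ = x₂ ^ 2 / (2 * τ₂) + ℓ v₂ := he χ₂ τ₂
  rw [hχv] at h0
  rw [he₁, he₂]
  nlinarith [h0, hconv, hpersp]

variable {Ω : Type*} [MeasurableSpace Ω] {μ : Measure Ω} [IsProbabilityMeasure μ]
variable {G Z : Ω → ℝ} (hGmeas : Measurable G) (hZmeas : Measurable Z)

include hℓ in
lemma continuous_ℓ : Continuous ℓ := by
  have := ConvexOn.continuousOn isOpen_univ hℓ
  rw [← continuousOn_univ]
  exact this

include hℓ hP in
lemma continuous_e (he : ∀ χ τ : ℝ, e χ τ = (χ - P χ τ) ^ 2 / (2 * τ) + ℓ (P χ τ))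
    {τ : ℝ} (hτ : 0 < τ) : Continuous (fun χ => e χ τ) := by
  have hfc : Continuous (fun χ : ℝ => χ - P χ τ) := (ffun_lipschitz hℓ hP τ hτ).continuous
  have hPc : Continuous (fun χ : ℝ => P χ τ) := by
    have : (fun χ : ℝ => P χ τ) = fun χ => χ - (χ - P χ τ) := by funext χ; ring
    rw [this]
    exact continuous_id.sub hfc
  have : (fun χ => e χ τ) = fun χ => (χ - P χ τ) ^ 2 / (2 * τ) + ℓ (P χ τ) := by
    funext χ; exact he χ τ
  rw [this]
  exact ((hfc.pow 2).div_const _).add ((continuous_ℓ hℓ).comp hPc)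

include hGmeas in
lemma integrable_G_sq (hGauss : Measure.map G μ = gaussianReal 0 1) :
    Integrable (fun ω => (G ω) ^ 2) μ := by
  have h1 : Integrable (fun x : ℝ => x ^ 2) (Measure.map G μ) := by
    rw [hGauss]; exact integrable_sq_gaussian
  rw [integrable_map_measure ((continuous_pow 2).aestronglyMeasurable) hGmeas.aemeasurable] at h1
  exact h1

include hℓ hP hGmeas hZmeas in
lemma integrable_envelope (hGauss : Measure.map G μ = gaussianReal 0 1)
    (hA : ∀ c : ℝ, Integrable (fun ω => (maxAbsSubgrad ℓ (c * G ω + Z ω)) ^ 2) μ)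
    (he : ∀ χ τ : ℝ, e χ τ = (χ - P χ τ) ^ 2 / (2 * τ) + ℓ (P χ τ))
    (α : ℝ) {τ : ℝ} (hτ : 0 < τ) :
    Integrable (fun ω => e (α * G ω + Z ω) τ - ℓ (Z ω)) μ := by
  set B : Ω → ℝ := fun ω => α ^ 2 * (G ω) ^ 2 / (2 * τ)
    + τ * ((maxAbsSubgrad ℓ (Z ω)) ^ 2 + (maxAbsSubgrad ℓ (α * G ω + Z ω)) ^ 2) / 2
    + ((maxAbsSubgrad ℓ (Z ω)) ^ 2 + α ^ 2 * (G ω) ^ 2) / 2 with hBdef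
  have hIB : Integrable B μ := by
    have hG2 := integrable_G_sq hGmeas hGauss
    have hM0 : Integrable (fun ω => (maxAbsSubgrad ℓ (Z ω)) ^ 2) μ := by
      have := hA 0
      simpa using this
    have hMα := hA α
    have hcomb := ((hG2.const_mul (α ^ 2 / (2 * τ))).add ((hM0.add hMα).const_mul (τ / 2))).add
      ((hM0.add (hG2.const_mul (α ^ 2))).const_mul (1 / 2))
    apply hcomb.congr
    filter_upwards with ω
    simp only [Pi.add_apply, hBdef]
    ring
  have hbound : ∀ ω, |e (α * G ω + Z ω) τ - ℓ (Z ω)| ≤ B ω := by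
    intro ω
    set g := G ω
    set z := Z ω
    set χ := α * g + z with hχ
    set v := P χ τ with hv
    set M0 := maxAbsSubgrad ℓ z with hM0
    set Mχ := maxAbsSubgrad ℓ χ with hMχ
    have hM0nn : 0 ≤ M0 := maxAbsSubgrad_nonneg hℓ z
    have hMχnn : 0 ≤ Mχ := maxAbsSubgrad_nonneg hℓ χ
    have h_up : e χ τ - ℓ z ≤ (α * g) ^ 2 / (2 * τ) := by
      have := prox_le hP (a := χ) hτ z
      rw [he]
      have hsimp : χ - z = α * g := by rw [hχ]; ring
      rw [hsimp] at this
      linarith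
    have hsχ := lsl_mem_subdiff hℓ χ
    have hsz := lsl_mem_subdiff hℓ z
    have habsχ : |lsl ℓ χ| ≤ Mχ := abs_le_maxAbsSubgrad hℓ hsχ
    have habsz : |lsl ℓ z| ≤ M0 := abs_le_maxAbsSubgrad hℓ hsz
    -- |χ - v| ≤ τ * Mχ
    have h1 : |χ - v| ≤ τ * Mχ := by
      have hmono := subdiff_mono hsχ (prox_subgrad hℓ hP (a := χ) hτ)
      rw [← hv] at hmono
      have hmono' := mul_nonneg hτ.le hmono
      have hexp : τ * ((lsl ℓ χ - (χ - v) / τ) * (χ - v))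
          = τ * (lsl ℓ χ * (χ - v)) - (χ - v) ^ 2 := by
        field_simp
      rw [hexp] at hmono'
      have h2 : (χ - v) ^ 2 ≤ τ * (lsl ℓ χ * (χ - v)) := by linarith
      have h3 : lsl ℓ χ * (χ - v) ≤ Mχ * |χ - v| := by
        calc lsl ℓ χ * (χ - v) ≤ |lsl ℓ χ * (χ - v)| := le_abs_self _
          _ = |lsl ℓ χ| * |χ - v| := abs_mul _ _
          _ ≤ Mχ * |χ - v| := mul_le_mul_of_nonneg_right habsχ (abs_nonneg _)
      have habs : |χ - v| ^ 2 ≤ (τ * Mχ) * |χ - v| := by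
        calc |χ - v| ^ 2 = (χ - v) ^ 2 := sq_abs _
          _ ≤ τ * (lsl ℓ χ * (χ - v)) := h2
          _ ≤ τ * (Mχ * |χ - v|) := mul_le_mul_of_nonneg_left h3 hτ.le
          _ = (τ * Mχ) * |χ - v| := by ring
      rcases eq_or_lt_of_le (abs_nonneg (χ - v)) with h0 | h0
      · rw [← h0]
        exact mul_nonneg hτ.le hMχnn
      · nlinarith [habs, h0]
    have h_low : -(M0 * (τ * Mχ + |α * g|)) ≤ e χ τ - ℓ z := by
      have hvz : ℓ v - ℓ z ≥ lsl ℓ z * (v - z) := by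
        have := hsz v
        linarith
      have h4 : lsl ℓ z * (v - z) ≥ -(M0 * |v - z|) := by
        have : -(lsl ℓ z * (v - z)) ≤ |lsl ℓ z * (v - z)| := neg_le_abs _
        rw [abs_mul] at this
        nlinarith [mul_le_mul_of_nonneg_right habsz (abs_nonneg (v - z))]
      have h5 : |v - z| ≤ τ * Mχ + |α * g| := by
        have : |v - z| ≤ |v - χ| + |χ - z| := by
          have := abs_sub_abs_le_abs_sub (v - z) (χ - z)
          calc |v - z| = |(v - χ) + (χ - z)| := by ring_nf
            _ ≤ |v - χ| + |χ - z| := abs_add_le _ _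
        have hχz : |χ - z| = |α * g| := by rw [hχ]; ring_nf
        rw [abs_sub_comm v χ] at this
        linarith [this, h1, hχz.le, hχz.ge]
      have h6 : e χ τ - ℓ z ≥ ℓ v - ℓ z := by
        rw [he]
        have : (0:ℝ) ≤ (χ - v) ^ 2 / (2 * τ) := by positivity
        rw [← hv]
        linarith
      nlinarith [hvz, h4, h5, h6, hM0nn]
    have hBge : M0 * (τ * Mχ + |α * g|) ≤ τ * (M0 ^ 2 + Mχ ^ 2) / 2 + (M0 ^ 2 + α ^ 2 * g ^ 2) / 2 := by
      have hag : |α * g| ^ 2 = α ^ 2 * g ^ 2 := by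
        rw [sq_abs]; ring
      nlinarith [sq_nonneg (M0 - Mχ), sq_nonneg (M0 - |α * g|), abs_nonneg (α * g), hτ,
        mul_nonneg (mul_nonneg hτ.le hM0nn) hMχnn, sq_nonneg (M0 + Mχ)]
    rw [abs_le]
    constructor
    · have : (0:ℝ) ≤ (α * g) ^ 2 / (2 * τ) := by positivity
      have hB : B ω = (α * g) ^ 2 / (2 * τ) + τ * (M0 ^ 2 + Mχ ^ 2) / 2 + (M0 ^ 2 + α ^ 2 * g ^ 2) / 2 := by
        rw [hBdef]; simp only [g, z, χ, M0, Mχ]; ring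
      rw [hB] at *
      linarith [h_low, hBge]
    · have hB : B ω = (α * g) ^ 2 / (2 * τ) + τ * (M0 ^ 2 + Mχ ^ 2) / 2 + (M0 ^ 2 + α ^ 2 * g ^ 2) / 2 := by
        rw [hBdef]; simp only [g, z, χ, M0, Mχ]; ring
      have hrest : (0:ℝ) ≤ τ * (M0 ^ 2 + Mχ ^ 2) / 2 + (M0 ^ 2 + α ^ 2 * g ^ 2) / 2 := by positivity
      rw [hB]
      linarith [h_up]
  have haesm : AEStronglyMeasurable (fun ω => e (α * G ω + Z ω) τ - ℓ (Z ω)) μ := by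
    have hm : Measurable fun ω => α * G ω + Z ω := (hGmeas.const_mul α).add hZmeas
    exact (((continuous_e hℓ hP he hτ).measurable.comp hm).sub
      ((continuous_ℓ hℓ).measurable.comp hZmeas)).aestronglyMeasurable
  exact Integrable.mono' hIB haesm (Filter.Eventually.of_forall hbound)

end Main

section Contra
variable {ℓ : ℝ → ℝ} {P : ℝ → ℝ → ℝ}
variable (hℓ : ConvexOn ℝ Set.univ ℓ)
variable (hP : ∀ (a b : ℝ), 0 < b → ∀ v : ℝ, v ≠ P a b →
      (a - P a b) ^ 2 / (2 * b) + ℓ (P a b) < (a - v) ^ 2 / (2 * b) + ℓ v)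

include hℓ in
lemma contradiction_of_const_subgrad {s₀ : ℝ} (hs : ∀ v : ℝ, s₀ ∈ subdiff ℓ v)
    (hℓcond :
      (∃ v : ℝ, ¬ DifferentiableAt ℝ ℓ v) ∨
      (∃ a b : ℝ, a < b ∧ (∀ x ∈ Ioo a b, DifferentiableAt ℝ ℓ x) ∧
        StrictMonoOn (deriv ℓ) (Ioo a b))) : False := by
  have haff : ∀ y : ℝ, ℓ y = ℓ 0 + s₀ * y := by
    intro y
    have h1 := hs 0 y
    have h2 := hs y 0
    apply le_antisymm <;> [nlinarith; nlinarith]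
  have hfun : ℓ = fun y => ℓ 0 + s₀ * y := by
    have hc : ℓ 0 = ℓ 0 := rfl
    funext y
    exact haff y
  rcases hℓcond with ⟨v, hv⟩ | ⟨a, b, hab, hdiff, hSM⟩
  · apply hv
    rw [hfun]
    exact (differentiable_const (ℓ 0)).add (differentiable_id.const_mul s₀) |>.differentiableAt
  · have hderiv : ∀ x : ℝ, deriv ℓ x = s₀ := by
      intro x
      conv_lhs => rw [hfun]
      simpa using (((hasDerivAt_id x).const_mul s₀).const_add (ℓ 0)).deriv
    have hx₁ : (2 * a + b) / 3 ∈ Ioo a b := by constructor <;> [linarith; linarith]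
    have hx₂ : (a + 2 * b) / 3 ∈ Ioo a b := by constructor <;> [linarith; linarith]
    have := hSM hx₁ hx₂ (by linarith)
    rw [hderiv, hderiv] at this
    exact lt_irrefl _ this

include hℓ hP in
lemma key_alpha_eq {τ₁ τ₂ : ℝ} (h1 : 0 < τ₁) (h2 : 0 < τ₂)
    (hsAll : ∀ u : ℝ, τ₂ * (u - P u τ₁) = τ₁ * (u - P u τ₂))
    {v₀ s₀ : ℝ} (hs : s₀ ∈ subdiff ℓ v₀) :
    ℓ (v₀ + (τ₁ - τ₂) * s₀) = ℓ v₀ + s₀ * ((τ₁ - τ₂) * s₀)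
      ∧ s₀ ∈ subdiff ℓ (v₀ + (τ₁ - τ₂) * s₀) := by
  set χ := v₀ + τ₁ * s₀ with hχ
  have hPχ : P χ τ₁ = v₀ := prox_eq_of_subgrad hℓ hP h1 hs
  have hAll := hsAll χ
  rw [hPχ] at hAll
  have hχv₀ : χ - v₀ = τ₁ * s₀ := by rw [hχ]; ring
  have hPχ₂ : P χ τ₂ = v₀ + (τ₁ - τ₂) * s₀ := by
    have : τ₁ * (χ - P χ τ₂) = τ₁ * (τ₂ * s₀) := by
      rw [← hAll, hχv₀]; ring
    have h3 := mul_left_cancel₀ (ne_of_gt h1) this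
    have : P χ τ₂ = χ - τ₂ * s₀ := by linarith
    rw [this, hχ]; ring
  have hsub : s₀ ∈ subdiff ℓ (v₀ + (τ₁ - τ₂) * s₀) := by
    have := prox_subgrad hℓ hP (a := χ) h2
    rw [hPχ₂] at this
    have harg : (χ - (v₀ + (τ₁ - τ₂) * s₀)) / τ₂ = s₀ := by
      rw [hχ]; field_simp; ring
    rwa [harg] at this
  refine ⟨?_, hsub⟩
  have ha := hs (v₀ + (τ₁ - τ₂) * s₀)
  have hb := hsub v₀
  apply le_antisymm <;> nlinarith [ha, hb]

include hℓ hP in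
lemma case_alpha_eq {τ₁ τ₂ : ℝ} (h1 : 0 < τ₁) (h2 : 0 < τ₂) (h12 : τ₁ < τ₂)
    (hsAll : ∀ u : ℝ, τ₂ * (u - P u τ₁) = τ₁ * (u - P u τ₂))
    (hℓcond :
      (∃ v : ℝ, ¬ DifferentiableAt ℝ ℓ v) ∨
      (∃ a b : ℝ, a < b ∧ (∀ x ∈ Ioo a b, DifferentiableAt ℝ ℓ x) ∧
        StrictMonoOn (deriv ℓ) (Ioo a b))) : False := by
  rcases hℓcond with ⟨v₀, hv₀⟩ | ⟨a, b, hab, hdiff, hSM⟩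
  · -- kink case
    have hlt := lsl_lt_rsi_of_not_differentiable hℓ hv₀
    set s := lsl ℓ v₀
    set s' := rsi ℓ v₀
    have hsmem := lsl_mem_subdiff hℓ v₀
    have hs'mem := rsi_mem_subdiff hℓ v₀
    obtain ⟨hKs, _⟩ := key_alpha_eq hℓ hP h1 h2 hsAll hsmem
    obtain ⟨hKs', _⟩ := key_alpha_eq hℓ hP h1 h2 hsAll hs'mem
    have hA : 0 ≤ (s - s') * ((τ₁ - τ₂) * s) := by
      have := hs'mem (v₀ + (τ₁ - τ₂) * s)
      nlinarith [hKs, this]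
    have hB : 0 ≤ (s' - s) * ((τ₁ - τ₂) * s') := by
      have := hsmem (v₀ + (τ₁ - τ₂) * s')
      nlinarith [hKs', this]
    have hpos : 0 < (τ₂ - τ₁) * (s' - s) ^ 2 :=
      mul_pos (by linarith) (sq_pos_iff.mpr (sub_ne_zero.mpr (ne_of_gt hlt)))
    nlinarith [hA, hB, hpos]
  · -- smooth strictly convex interval case
    -- pick a point with nonzero derivative
    have hx₁ : (2 * a + b) / 3 ∈ Ioo a b := by constructor <;> [linarith; linarith]
    have hx₂ : (a + 2 * b) / 3 ∈ Ioo a b := by constructor <;> [linarith; linarith]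
    have hdlt : deriv ℓ ((2 * a + b) / 3) < deriv ℓ ((a + 2 * b) / 3) :=
      hSM hx₁ hx₂ (by linarith)
    obtain ⟨v₀, hv₀mem, hs₀ne⟩ : ∃ v₀, v₀ ∈ Ioo a b ∧ deriv ℓ v₀ ≠ 0 := by
      rcases eq_or_ne (deriv ℓ ((2 * a + b) / 3)) 0 with h | h
      · exact ⟨(a + 2 * b) / 3, hx₂, by rw [h] at hdlt; exact ne_of_gt hdlt⟩
      · exact ⟨(2 * a + b) / 3, hx₁, h⟩
    set s₀ := deriv ℓ v₀ with hs₀def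
    have hs₀mem : s₀ ∈ subdiff ℓ v₀ := deriv_mem_subdiff hℓ (hdiff v₀ hv₀mem)
    obtain ⟨hK, _⟩ := key_alpha_eq hℓ hP h1 h2 hsAll hs₀mem
    set v₂ := v₀ + (τ₁ - τ₂) * s₀ with hv₂def
    -- ℓ is affine with slope s₀ on the segment between v₀ and v₂
    have haffine : ∀ t ∈ segment ℝ v₀ v₂, ℓ t = ℓ v₀ + s₀ * (t - v₀) := by
      intro t ht
      exact affine_on_segment hℓ hs₀mem (by rw [hv₂def]; rw [hK]; ring_nf) ht
    rcases hs₀ne.lt_or_gt with hneg | hpos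
    · -- s₀ < 0 : v₂ > v₀
      have hv₂gt : v₀ < v₂ := by
        rw [hv₂def]
        nlinarith [mul_pos_of_neg_of_neg (by linarith : τ₁ - τ₂ < 0) hneg]
      set v' := (v₀ + min b v₂) / 2 with hv'
      have hv'₁ : v₀ < v' := by
        have : v₀ < min b v₂ := lt_min hv₀mem.2 hv₂gt
        rw [hv']; linarith
      have hv'b : v' < b := by
        rw [hv']; linarith [min_le_left b v₂, hv₀mem.2]
      have hv'v₂ : v' < v₂ := by
        rw [hv']; linarith [min_le_right b v₂, hv₂gt]
      have hv'mem : v' ∈ Ioo a b := ⟨lt_trans hv₀mem.1 hv'₁, hv'b⟩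
      have heq : ∀ t ∈ Ioo v₀ v₂, ℓ t = ℓ v₀ + s₀ * (t - v₀) := by
        intro t ht
        apply haffine
        rw [segment_eq_Icc hv₂gt.le]
        exact Ioo_subset_Icc_self ht
      have hev : ℓ =ᶠ[nhds v'] fun t => ℓ v₀ + s₀ * (t - v₀) := by
        filter_upwards [Ioo_mem_nhds hv'₁ hv'v₂] with t ht
        exact heq t ht
      have hder : deriv ℓ v' = s₀ := by
        rw [Filter.EventuallyEq.deriv_eq hev]
        simpa using (((hasDerivAt_id v').sub_const v₀).const_mul s₀ |>.const_add (ℓ v₀)).deriv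
      have := hSM hv₀mem hv'mem hv'₁
      rw [hder, ← hs₀def] at this
      exact lt_irrefl _ this
    · -- s₀ > 0 : v₂ < v₀
      have hv₂lt : v₂ < v₀ := by
        rw [hv₂def]
        nlinarith [mul_neg_of_neg_of_pos (by linarith : τ₁ - τ₂ < 0) hpos]
      set v' := (max a v₂ + v₀) / 2 with hv'
      have hv'₁ : v' < v₀ := by
        have : max a v₂ < v₀ := max_lt hv₀mem.1 hv₂lt
        rw [hv']; linarith
      have hv'a : a < v' := by
        rw [hv']; linarith [le_max_left a v₂, hv₀mem.1]
      have hv'v₂ : v₂ < v' := by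
        rw [hv']; linarith [le_max_right a v₂, hv₂lt]
      have hv'mem : v' ∈ Ioo a b := ⟨hv'a, lt_trans hv'₁ hv₀mem.2⟩
      have heq : ∀ t ∈ Ioo v₂ v₀, ℓ t = ℓ v₀ + s₀ * (t - v₀) := by
        intro t ht
        apply haffine
        rw [segment_symm, segment_eq_Icc hv₂lt.le]
        exact Ioo_subset_Icc_self ht
      have hev : ℓ =ᶠ[nhds v'] fun t => ℓ v₀ + s₀ * (t - v₀) := by
        filter_upwards [Ioo_mem_nhds hv'v₂ hv'₁] with t ht
        exact heq t ht
      have hder : deriv ℓ v' = s₀ := by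
        rw [Filter.EventuallyEq.deriv_eq hev]
        simpa using (((hasDerivAt_id v').sub_const v₀).const_mul s₀ |>.const_add (ℓ v₀)).deriv
      have := hSM hv'mem hv₀mem hv'₁
      rw [hder, ← hs₀def] at this
      exact lt_irrefl _ this

end Contra

end MEaux

open MEaux

/-- **Joint strict convexity of the Expected Moreau Envelope**: under assumption (A), if
`Z` is not a.s. constant and `ℓ` either has a point of non-differentiability or an open
interval on which it is differentiable with strictly increasing derivative, then
`L(α,τ) = E[e_ℓ(αG+Z;τ) − ℓ(Z)]` is jointly strictly convex on `(0,∞) × (0,∞)`. -/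
theorem expected_moreau_envelope_strictConvex
    {Ω : Type*} [MeasurableSpace Ω] (μ : Measure Ω) [IsProbabilityMeasure μ]
    (G Z : Ω → ℝ) (hGmeas : Measurable G) (hZmeas : Measurable Z)
    (hGauss : Measure.map G μ = gaussianReal 0 1)
    (hIndep : IndepFun G Z μ)
    (hZnc : ¬ ∃ c : ℝ, ∀ᵐ ω ∂μ, Z ω = c)
    (ℓ : ℝ → ℝ) (hℓ : ConvexOn ℝ Set.univ ℓ)
    (hℓcond :
      (∃ v : ℝ, ¬ DifferentiableAt ℝ ℓ v) ∨
      (∃ a b : ℝ, a < b ∧ (∀ x ∈ Ioo a b, DifferentiableAt ℝ ℓ x) ∧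
        StrictMonoOn (deriv ℓ) (Ioo a b)))
    (P : ℝ → ℝ → ℝ)
    (hP : ∀ (a b : ℝ), 0 < b → ∀ v : ℝ, v ≠ P a b →
      (a - P a b) ^ 2 / (2 * b) + ℓ (P a b) < (a - v) ^ 2 / (2 * b) + ℓ v)
    -- Assumption (A)
    (hA : ∀ c : ℝ, Integrable (fun ω => (maxAbsSubgrad ℓ (c * G ω + Z ω)) ^ 2) μ)
    (e : ℝ → ℝ → ℝ)
    (he : ∀ χ τ : ℝ, e χ τ = (χ - P χ τ) ^ 2 / (2 * τ) + ℓ (P χ τ))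
    (L : ℝ → ℝ → ℝ)
    (hL : ∀ α τ : ℝ, L α τ = ∫ ω, (e (α * G ω + Z ω) τ - ℓ (Z ω)) ∂μ) :
    StrictConvexOn ℝ (Ioi (0 : ℝ) ×ˢ Ioi (0 : ℝ)) (fun p : ℝ × ℝ => L p.1 p.2) := by
  classical
  have Hmain : ∀ (α₁ τ₁ α₂ τ₂ : ℝ), 0 < α₁ → 0 < τ₁ → 0 < α₂ → 0 < τ₂ →
      (α₁ ≠ α₂ ∨ τ₁ ≠ τ₂) → τ₁ ≤ τ₂ → ∀ θ : ℝ, 0 < θ → θ < 1 →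
      L (θ * α₁ + (1 - θ) * α₂) (θ * τ₁ + (1 - θ) * τ₂)
        < θ * L α₁ τ₁ + (1 - θ) * L α₂ τ₂ := by
    intro α₁ τ₁ α₂ τ₂ hα₁ hτ₁ hα₂ hτ₂ hne hτle θ hθ hθ1
    have hθ1' : (0:ℝ) ≤ 1 - θ := by linarith
    have hτc : 0 < θ * τ₁ + (1 - θ) * τ₂ := by nlinarith [mul_pos hθ hτ₁, mul_nonneg hθ1' hτ₂.le]
    set Φ : Ω → ℝ := fun ω =>
      e ((θ * α₁ + (1 - θ) * α₂) * G ω + Z ω) (θ * τ₁ + (1 - θ) * τ₂) - ℓ (Z ω) with hΦdef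
    set Φ₁ : Ω → ℝ := fun ω => e (α₁ * G ω + Z ω) τ₁ - ℓ (Z ω) with hΦ₁def
    set Φ₂ : Ω → ℝ := fun ω => e (α₂ * G ω + Z ω) τ₂ - ℓ (Z ω) with hΦ₂def
    have hI : Integrable Φ μ :=
      integrable_envelope hℓ hP hGmeas hZmeas hGauss hA he _ hτc
    have hI₁ : Integrable Φ₁ μ :=
      integrable_envelope hℓ hP hGmeas hZmeas hGauss hA he _ hτ₁
    have hI₂ : Integrable Φ₂ μ :=
      integrable_envelope hℓ hP hGmeas hZmeas hGauss hA he _ hτ₂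
    set R : Ω → ℝ := fun ω => θ * (1 - θ) *
      ((α₁ * G ω + Z ω - P (α₁ * G ω + Z ω) τ₁) * τ₂
        - (α₂ * G ω + Z ω - P (α₂ * G ω + Z ω) τ₂) * τ₁) ^ 2
      / (2 * τ₁ * τ₂ * (θ * τ₁ + (1 - θ) * τ₂)) with hRdef
    have hR0 : ∀ ω, 0 ≤ R ω := by
      intro ω
      rw [hRdef]
      apply div_nonneg
      · exact mul_nonneg (mul_nonneg hθ.le hθ1') (sq_nonneg _)
      · have : 0 < 2 * τ₁ * τ₂ * (θ * τ₁ + (1 - θ) * τ₂) :=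
          mul_pos (mul_pos (by linarith) hτ₂) hτc
        exact this.le
    have hpt : ∀ ω, Φ ω + R ω ≤ θ * Φ₁ ω + (1 - θ) * Φ₂ ω := by
      intro ω
      have h := key_ineq hℓ hP he hτ₁ hτ₂ hθ.le hθ1.le (α₁ * G ω + Z ω) (α₂ * G ω + Z ω)
      have harg : θ * (α₁ * G ω + Z ω) + (1 - θ) * (α₂ * G ω + Z ω)
          = (θ * α₁ + (1 - θ) * α₂) * G ω + Z ω := by ring
      rw [harg] at h
      rw [hΦdef, hΦ₁def, hΦ₂def, hRdef]
      simp only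
      linarith [h]
    have hIcomb : Integrable (fun ω => θ * Φ₁ ω + (1 - θ) * Φ₂ ω) μ :=
      (hI₁.const_mul θ).add (hI₂.const_mul (1 - θ))
    have hle : ∫ ω, Φ ω ∂μ ≤ θ * ∫ ω, Φ₁ ω ∂μ + (1 - θ) * ∫ ω, Φ₂ ω ∂μ := by
      have h1 : ∫ ω, Φ ω ∂μ ≤ ∫ ω, (θ * Φ₁ ω + (1 - θ) * Φ₂ ω) ∂μ := by
        apply integral_mono hI hIcomb
        intro ω
        show Φ ω ≤ θ * Φ₁ ω + (1 - θ) * Φ₂ ω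
        linarith [hpt ω, hR0 ω]
      rwa [integral_add (hI₁.const_mul θ) (hI₂.const_mul (1 - θ)),
        integral_const_mul, integral_const_mul] at h1
    rw [hL, hL, hL]
    rcases lt_or_eq_of_le hle with hlt | heq
    · exact hlt
    -- equality case: derive a contradiction
    exfalso
    set D : Ω → ℝ := fun ω => (θ * Φ₁ ω + (1 - θ) * Φ₂ ω) - Φ ω with hDdef
    have hID : Integrable D μ := hIcomb.sub hI
    have hDnn : 0 ≤ᵐ[μ] D := by
      filter_upwards with ω
      have := hpt ω
      have := hR0 ω
      simp only [hDdef, Pi.zero_apply]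
      linarith
    have hintD : ∫ ω, D ω ∂μ = 0 := by
      rw [hDdef]
      simp only
      rw [integral_sub hIcomb hI,
        integral_add (hI₁.const_mul θ) (hI₂.const_mul (1 - θ)),
        integral_const_mul, integral_const_mul]
      linarith [heq]
    have haeD : D =ᵐ[μ] 0 := (integral_eq_zero_iff_of_nonneg_ae hDnn hID).mp hintD
    -- continuous function H on pairs (z, g)
    set H : ℝ × ℝ → ℝ := fun pr =>
      τ₂ * ((α₁ * pr.2 + pr.1) - P (α₁ * pr.2 + pr.1) τ₁)
        - τ₁ * ((α₂ * pr.2 + pr.1) - P (α₂ * pr.2 + pr.1) τ₂) with hHdef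
    have hf₁c : Continuous (fun χ : ℝ => χ - P χ τ₁) := (ffun_lipschitz hℓ hP τ₁ hτ₁).continuous
    have hf₂c : Continuous (fun χ : ℝ => χ - P χ τ₂) := (ffun_lipschitz hℓ hP τ₂ hτ₂).continuous
    have hHcont : Continuous H := by
      rw [hHdef]
      exact (continuous_const.mul
          (hf₁c.comp ((continuous_const.mul continuous_snd).add continuous_fst))).sub
        (continuous_const.mul
          (hf₂c.comp ((continuous_const.mul continuous_snd).add continuous_fst)))
    have haeH : ∀ᵐ ω ∂μ, H (Z ω, G ω) = 0 := by
      filter_upwards [haeD] with ω hω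
      have h1 := hpt ω
      have h2 := hR0 ω
      have hDω : D ω = 0 := hω
      have hRω : R ω = 0 := by
        have : R ω ≤ D ω := by rw [hDdef]; simp only; linarith [h1]
        linarith [h2, hDω ▸ this]
      rw [hRdef] at hRω
      simp only at hRω
      have hden : 2 * τ₁ * τ₂ * (θ * τ₁ + (1 - θ) * τ₂) ≠ 0 :=
        ne_of_gt (mul_pos (mul_pos (by linarith) hτ₂) hτc)
      rw [div_eq_zero_iff] at hRω
      rcases hRω with hnum | hdenz
      · have hθθ : θ * (1 - θ) ≠ 0 := ne_of_gt (mul_pos hθ (by linarith))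
        have hsq : ((α₁ * G ω + Z ω - P (α₁ * G ω + Z ω) τ₁) * τ₂
            - (α₂ * G ω + Z ω - P (α₂ * G ω + Z ω) τ₂) * τ₁) ^ 2 = 0 := by
          rcases mul_eq_zero.mp hnum with h | h
          · exact absurd h hθθ
          · exact h
        have hz' : (α₁ * G ω + Z ω - P (α₁ * G ω + Z ω) τ₁) * τ₂
            - (α₂ * G ω + Z ω - P (α₂ * G ω + Z ω) τ₂) * τ₁ = 0 := by
          exact pow_eq_zero_iff two_ne_zero |>.mp hsq
        rw [hHdef]
        simp only
        linarith [hz']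
      · exact absurd hdenz hden
    -- transfer to the product measure
    have hpairmeas : Measurable (fun ω => (Z ω, G ω)) := hZmeas.prodMk hGmeas
    have hmap : μ.map (fun ω => (Z ω, G ω)) = (μ.map Z).prod (μ.map G) :=
      (indepFun_iff_map_prod_eq_prod_map_map hZmeas.aemeasurable hGmeas.aemeasurable).mp
        hIndep.symm
    have hsetH : MeasurableSet {pr : ℝ × ℝ | H pr = 0} :=
      (isClosed_eq hHcont continuous_const).measurableSet
    have hprod_ae : ∀ᵐ pr ∂((μ.map Z).prod (μ.map G)), H pr = 0 := by
      rw [← hmap]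
      exact (ae_map_iff hpairmeas.aemeasurable hsetH).mpr haeH
    haveI : IsProbabilityMeasure (μ.map Z) := Measure.isProbabilityMeasure_map hZmeas.aemeasurable
    haveI : IsProbabilityMeasure (μ.map G) := Measure.isProbabilityMeasure_map hGmeas.aemeasurable
    have hz_ae : ∀ᵐ z ∂(μ.map Z), ∀ᵐ g ∂(μ.map G), H (z, g) = 0 :=
      Measure.ae_ae_of_ae_prod hprod_ae
    have hz_all : ∀ᵐ z ∂(μ.map Z), ∀ g : ℝ, H (z, g) = 0 := by
      filter_upwards [hz_ae] with z hz
      rw [hGauss] at hz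
      have hvol : (fun g => H (z, g)) =ᵐ[(volume : Measure ℝ)] (fun _ => 0) :=
        (gaussianReal_absolutelyContinuous' 0 one_ne_zero).ae_eq hz
      have := (Continuous.ae_eq_iff_eq (volume : Measure ℝ)
        (hHcont.comp (Continuous.prodMk_right z)) continuous_const).mp hvol
      intro g
      exact congrFun this g
    -- the set of good z is closed
    set S : Set ℝ := {z : ℝ | ∀ g : ℝ, H (z, g) = 0} with hSdef
    have hSclosed : IsClosed S := by
      rw [hSdef, Set.setOf_forall]
      exact isClosed_iInter fun g =>
        isClosed_eq (hHcont.comp (Continuous.prodMk_left g)) continuous_const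
    by_cases hex : ∃ z₁ z₂ : ℝ, z₁ ∈ S ∧ z₂ ∈ S ∧ z₁ ≠ z₂
    · obtain ⟨z₁, z₂, hz₁, hz₂, hz₁₂⟩ := hex
      rcases eq_or_ne α₁ α₂ with hαeq | hαne
      · -- equal α: τ₁ < τ₂
        have hττ : τ₁ ≠ τ₂ := hne.resolve_left (by simp [hαeq])
        have hτlt : τ₁ < τ₂ := lt_of_le_of_ne hτle hττ
        have hsAll : ∀ u : ℝ, τ₂ * (u - P u τ₁) = τ₁ * (u - P u τ₂) := by
          intro u
          have hg := hz₁ ((u - z₁) / α₁)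
          rw [hHdef] at hg
          simp only at hg
          have harg : α₁ * ((u - z₁) / α₁) + z₁ = u := by field_simp [hα₁.ne']; ring
          rw [hαeq] at harg
          rw [← hαeq] at hg
          rw [show α₁ * ((u - z₁) / α₁) + z₁ = u from by field_simp [hα₁.ne']; ring] at hg
          linarith [hg]
        exact case_alpha_eq hℓ hP hτ₁ hτ₂ hτlt hsAll hℓcond
      · -- distinct α: the slope map is globally constant, ℓ affine
        have hδne : (z₂ - z₁) * (α₁ - α₂) / α₁ ≠ 0 := by
          apply div_ne_zero
          · exact mul_ne_zero (sub_ne_zero.mpr hz₁₂.symm) (sub_ne_zero.mpr hαne)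
          · exact ne_of_gt hα₁
        set δ := (z₂ - z₁) * (α₁ - α₂) / α₁ with hδdef
        have hper : ∀ w : ℝ, (fun χ => χ - P χ τ₂) (w + δ) = (fun χ => χ - P χ τ₂) w := by
          intro w
          have hg₁ := hz₁ ((w - z₁) / α₂)
          have hg₂ := hz₂ ((w - z₁) / α₂ + (z₁ - z₂) / α₁)
          rw [hHdef] at hg₁ hg₂
          simp only at hg₁ hg₂
          have harg1 : α₂ * ((w - z₁) / α₂) + z₁ = w := by field_simp [hα₂.ne']; ring
          have harg2 : α₁ * ((w - z₁) / α₂ + (z₁ - z₂) / α₁) + z₂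
              = α₁ * ((w - z₁) / α₂) + z₁ := by field_simp; ring
          have harg3 : α₂ * ((w - z₁) / α₂ + (z₁ - z₂) / α₁) + z₂ = w + δ := by
            rw [hδdef]; field_simp; ring
          rw [harg1] at hg₁
          rw [harg2, harg3] at hg₂
          -- hg₁ : τ₂ * f₁ (α₁ * ((w-z₁)/α₂) + z₁) - τ₁ * f₂ w = 0
          -- hg₂ : τ₂ * f₁ (α₁ * ((w-z₁)/α₂) + z₁) - τ₁ * f₂ (w + δ) = 0
          have : τ₁ * ((w + δ) - P (w + δ) τ₂) = τ₁ * (w - P w τ₂) := by linarith [hg₁, hg₂]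
          have := mul_left_cancel₀ (ne_of_gt hτ₁) this
          simpa using this
        have hmono : Monotone (fun χ => χ - P χ τ₂) := fun u v huv => ffun_mono hℓ hP hτ₂ huv
        have hconst := const_of_monotone_periodic hmono hδne hper
        -- every point has the same subgradient s₀
        set s₀ : ℝ := (0 - P 0 τ₂) / τ₂ with hs₀def
        have hsub : ∀ v : ℝ, s₀ ∈ subdiff ℓ v := by
          intro v
          set χ := v + (0 - P 0 τ₂) with hχdef
          have hfχ : χ - P χ τ₂ = 0 - P 0 τ₂ := hconst χ 0
          have hPχ : P χ τ₂ = v := by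
            have : χ - P χ τ₂ = χ - v := by rw [hfχ, hχdef]; ring
            linarith [this]
          have := prox_subgrad hℓ hP (a := χ) hτ₂
          rw [hPχ] at this
          have hsval : (χ - v) / τ₂ = s₀ := by
            rw [hs₀def, hχdef]; ring_nf
          rwa [hsval] at this
        exact contradiction_of_const_subgrad hℓ hsub hℓcond
    · -- no two distinct points: Z is a.s. constant
      push_neg at hex
      have hz₀ : ∃ z₀, z₀ ∈ S := by
        have := hz_all.exists
        exact ⟨this.choose, this.choose_spec⟩
      obtain ⟨z₀, hz₀S⟩ := hz₀
      have hZconst : ∀ᵐ z ∂(μ.map Z), z = z₀ := by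
        filter_upwards [hz_all] with z hz
        exact hex z z₀ hz hz₀S
      have : ∀ᵐ ω ∂μ, Z ω = z₀ := by
        have hsp : MeasurableSet {z : ℝ | z = z₀} := measurableSet_eq
        exact (ae_map_iff hZmeas.aemeasurable hsp).mp hZconst
      exact hZnc ⟨z₀, this⟩
  constructor
  · exact (convex_Ioi (0:ℝ)).prod (convex_Ioi (0:ℝ))
  intro p hp q hq hpq a b ha hb hab
  simp only [Prod.smul_fst, Prod.smul_snd, Prod.fst_add, Prod.snd_add, smul_eq_mul]
  obtain ⟨hp1, hp2⟩ := (mem_prod.mp hp)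
  obtain ⟨hq1, hq2⟩ := (mem_prod.mp hq)
  have hb' : b = 1 - a := by linarith
  subst hb'
  have hne : p.1 ≠ q.1 ∨ p.2 ≠ q.2 := by
    by_contra hcon
    push_neg at hcon
    exact hpq (Prod.ext hcon.1 hcon.2)
  rcases le_total p.2 q.2 with hτle | hτle
  · exact Hmain p.1 p.2 q.1 q.2 hp1 hp2 hq1 hq2 hne hτle a ha (by linarith)
  · have hne' : q.1 ≠ p.1 ∨ q.2 ≠ p.2 := by
      rcases hne with h | h
      · exact Or.inl h.symm
      · exact Or.inr h.symm
    have := Hmain q.1 q.2 p.1 p.2 hq1 hq2 hp1 hp2 hne' hτle (1 - a) (by linarith) (by linarith)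
    have harg1 : (1 - a) * q.1 + (1 - (1 - a)) * p.1 = a * p.1 + (1 - a) * q.1 := by ring
    have harg2 : (1 - a) * q.2 + (1 - (1 - a)) * p.2 = a * p.2 + (1 - a) * q.2 := by ring
    rw [harg1, harg2] at this
    linarith [this]
end

section
/- Strict convexity of the expected loss: Let ℓ : ℝ → ℝ be convex with ℓ(x) ≥ ℓ(0) = 0 for all x ∈ ℝ and suppose that ℓ(x₊) > 0 for some x₊ > 0. Let G be a standard normal random variable, and let Z be a real-valued random variable independent of G that is not almost surely constant, and assume (A): E[ (ℓ'₊(cG + Z))² ] < ∞ for every c ∈ ℝ. Then the function F(α) := E[ ℓ(αG + Z) − ℓ(Z) ] is finite for every α ∈ ℝ and is strictly convex on (0, ∞). -/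
open MeasureTheory ProbabilityTheory Set

section ConvexFacts

variable {ℓ : ℝ → ℝ}

lemma slope_mono (hℓ : ConvexOn ℝ Set.univ ℓ) {x y z : ℝ} (hxy : x < y) (hyz : y < z) :
    (ℓ y - ℓ x) / (y - x) ≤ (ℓ z - ℓ y) / (z - y) :=
  hℓ.slope_mono_adjacent (mem_univ x) (mem_univ z) hxy hyz

lemma subdiff_nonempty (hℓ : ConvexOn ℝ Set.univ ℓ) (x : ℝ) : (subdiff ℓ x).Nonempty := by
  set S : Set ℝ := (fun y => (ℓ y - ℓ x) / (y - x)) '' Ioi x with hS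
  have hne : S.Nonempty := ⟨_, ⟨x + 1, by simp, rfl⟩⟩
  have hlb : ∀ w < x, ∀ r ∈ S, (ℓ x - ℓ w) / (x - w) ≤ r := by
    rintro w hw r ⟨y, hy, rfl⟩
    exact slope_mono hℓ hw hy
  have hbdd : BddBelow S := ⟨(ℓ x - ℓ (x - 1)) / (x - (x - 1)), fun r hr =>
    hlb (x - 1) (by linarith) r hr⟩
  refine ⟨sInf S, fun y => ?_⟩
  rcases lt_trichotomy y x with h | h | h
  · have h1 : (ℓ x - ℓ y) / (x - y) ≤ sInf S := le_csInf hne (hlb y h)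
    have h2 : (ℓ x - ℓ y) / (x - y) * (y - x) = -(ℓ x - ℓ y) := by
      rw [div_mul_eq_mul_div, div_eq_iff (by linarith : x - y ≠ 0)]; ring
    nlinarith [mul_le_mul_of_nonpos_right h1 (by linarith : y - x ≤ 0)]
  · simp [h]
  · have h1 : sInf S ≤ (ℓ y - ℓ x) / (y - x) := csInf_le hbdd ⟨y, h, rfl⟩
    have h2 : (ℓ y - ℓ x) / (y - x) * (y - x) = ℓ y - ℓ x := by
      rw [div_mul_eq_mul_div, div_eq_iff (by linarith : y - x ≠ 0)]
    nlinarith [mul_le_mul_of_nonneg_right h1 (by linarith : (0:ℝ) ≤ y - x)]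

lemma abs_le_of_mem_subdiff {x s : ℝ} (hs : s ∈ subdiff ℓ x) :
    |s| ≤ |ℓ (x + 1) - ℓ x| + |ℓ (x - 1) - ℓ x| := by
  have h1 := hs (x + 1)
  have h2 := hs (x - 1)
  rw [abs_le]
  have ha := le_abs_self (ℓ (x+1) - ℓ x)
  have hb := le_abs_self (ℓ (x-1) - ℓ x)
  have ha' := abs_nonneg (ℓ (x+1) - ℓ x)
  have hb' := abs_nonneg (ℓ (x-1) - ℓ x)
  constructor <;> linarith

lemma bddAbove_abs_subdiff (x : ℝ) : BddAbove (abs '' subdiff ℓ x) := by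
  refine ⟨|ℓ (x + 1) - ℓ x| + |ℓ (x - 1) - ℓ x|, ?_⟩
  rintro r ⟨s, hs, rfl⟩
  exact abs_le_of_mem_subdiff hs

lemma le_maxAbsSubgrad {x s : ℝ} (hs : s ∈ subdiff ℓ x) : |s| ≤ maxAbsSubgrad ℓ x :=
  le_csSup (bddAbove_abs_subdiff x) ⟨s, hs, rfl⟩

lemma maxAbsSubgrad_nonneg (hℓ : ConvexOn ℝ Set.univ ℓ) (x : ℝ) : 0 ≤ maxAbsSubgrad ℓ x := by
  obtain ⟨s, hs⟩ := subdiff_nonempty hℓ x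
  exact (abs_nonneg s).trans (le_maxAbsSubgrad hs)

lemma abs_loss_sub_le (hℓ : ConvexOn ℝ Set.univ ℓ) (a b : ℝ) :
    |ℓ a - ℓ b| ≤ (maxAbsSubgrad ℓ a + maxAbsSubgrad ℓ b) * |a - b| := by
  obtain ⟨sa, hsa⟩ := subdiff_nonempty hℓ a
  obtain ⟨sb, hsb⟩ := subdiff_nonempty hℓ b
  have h1 : ℓ a - ℓ b ≤ |sa| * |a - b| := by
    have := hsa b
    calc ℓ a - ℓ b ≤ -(sa * (b - a)) := by linarith
    _ = sa * (a - b) := by ring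
    _ ≤ |sa * (a-b)| := le_abs_self _
    _ = |sa| * |a - b| := abs_mul _ _
  have h2 : ℓ b - ℓ a ≤ |sb| * |a - b| := by
    have := hsb a
    calc ℓ b - ℓ a ≤ -(sb * (a - b)) := by linarith
    _ = sb * (b - a) := by ring
    _ ≤ |sb * (b-a)| := le_abs_self _
    _ = |sb| * |b - a| := abs_mul _ _
    _ = |sb| * |a - b| := by rw [abs_sub_comm]
  have ha := le_maxAbsSubgrad hsa
  have hb := le_maxAbsSubgrad hsb
  have habs := abs_nonneg (a - b)
  rw [abs_sub_le_iff]
  constructor <;> nlinarith [abs_nonneg sa, abs_nonneg sb]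

end ConvexFacts

section Part2
variable {ℓ : ℝ → ℝ}

lemma eq_on_segment (hℓ : ConvexOn ℝ Set.univ ℓ) {a b t s : ℝ} (ht : 0 < t) (hs : 0 < s)
    (hts : t + s = 1) (heq : ℓ (t * a + s * b) = t * ℓ a + s * ℓ b) :
    ∀ r ∈ Icc (0:ℝ) 1, ℓ ((1 - r) * a + r * b) = (1 - r) * ℓ a + r * ℓ b := by
  rintro r ⟨hr0, hr1⟩
  have hs1 : s < 1 := by linarith
  have cvx1 : ℓ ((1 - r) * a + r * b) ≤ (1 - r) * ℓ a + r * ℓ b := by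
    have := hℓ.2 (mem_univ a) (mem_univ b) (by linarith : (0:ℝ) ≤ 1 - r) hr0 (by ring)
    simpa using this
  set L := ℓ ((1 - r) * a + r * b) with hL
  refine le_antisymm cvx1 ?_
  rcases le_total r s with hrs | hsr
  · -- r ≤ s, use combination of x_r and b
    set lam := (1 - s) / (1 - r) with hlam
    have h1r : (0:ℝ) < 1 - r := by linarith
    have hlam_pos : 0 < lam := by rw [hlam]; exact div_pos (by linarith) h1r
    have hkey : lam * (1 - r) = t := by
      rw [hlam, div_mul_cancel₀]; linarith; linarith
    have hlr : lam * r = lam - t := by linear_combination -hkey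
    have hcomb : t * a + s * b = lam * ((1 - r) * a + r * b) + (1 - lam) * b := by
      linear_combination (-a) * hkey + (-b) * hlr + b * hts
    have hlam_le : lam ≤ 1 := by
      rw [hlam, div_le_one h1r]; linarith
    have cvx2 : ℓ (t * a + s * b) ≤ lam * L + (1 - lam) * ℓ b := by
      rw [hcomb]
      have := hℓ.2 (mem_univ ((1 - r) * a + r * b)) (mem_univ b) hlam_pos.le
        (by linarith : (0:ℝ) ≤ 1 - lam) (by ring)
      simpa using this
    rw [heq] at cvx2
    have key : lam * ((1 - r) * ℓ a + r * ℓ b) + (1 - lam) * ℓ b = t * ℓ a + s * ℓ b := by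
      linear_combination (ℓ a) * hkey + (ℓ b) * hlr - (ℓ b) * hts
    have h5 : lam * ((1 - r) * ℓ a + r * ℓ b) ≤ lam * L := by linarith
    exact (mul_le_mul_iff_right₀ hlam_pos).mp h5
  · -- s ≤ r, use combination of a and x_r
    have hr_pos : 0 < r := lt_of_lt_of_le hs hsr
    set mu := s / r with hmu
    have hmu_pos : 0 < mu := by rw [hmu]; exact div_pos hs hr_pos
    have hmu_le : mu ≤ 1 := by rw [hmu, div_le_one hr_pos]; linarith
    have hkey : mu * r = s := by rw [hmu, div_mul_cancel₀]; linarith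
    have hcomb : t * a + s * b = mu * ((1 - r) * a + r * b) + (1 - mu) * a := by
      linear_combination a * hts + (a - b) * hkey
    have cvx2 : ℓ (t * a + s * b) ≤ mu * L + (1 - mu) * ℓ a := by
      rw [hcomb]
      have := hℓ.2 (mem_univ ((1 - r) * a + r * b)) (mem_univ a) hmu_pos.le
        (by linarith : (0:ℝ) ≤ 1 - mu) (by ring)
      simpa using this
    rw [heq] at cvx2
    have key : mu * ((1 - r) * ℓ a + r * ℓ b) + (1 - mu) * ℓ a = t * ℓ a + s * ℓ b := by
      linear_combination (-(ℓ a)) * hts + (ℓ b - ℓ a) * hkey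
    have h5 : mu * ((1 - r) * ℓ a + r * ℓ b) ≤ mu * L := by linarith
    exact (mul_le_mul_iff_right₀ hmu_pos).mp h5

def AffOn (ℓ : ℝ → ℝ) (S : Set ℝ) : Prop := ∃ m q : ℝ, ∀ x ∈ S, ℓ x = m * x + q

lemma AffOn.mono {S T : Set ℝ} (h : AffOn ℓ S) (hTS : T ⊆ S) : AffOn ℓ T := by
  obtain ⟨m, q, hmq⟩ := h
  exact ⟨m, q, fun x hx => hmq x (hTS hx)⟩

lemma affOn_of_qaff {u v : ℝ} (huv : u ≤ v)
    (h : ∀ r ∈ Icc (0:ℝ) 1, ℓ ((1 - r) * u + r * v) = (1 - r) * ℓ u + r * ℓ v) :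
    AffOn ℓ (Icc u v) := by
  rcases eq_or_lt_of_le huv with rfl | hlt
  · exact ⟨0, ℓ u, fun x hx => by
      have : x = u := le_antisymm hx.2 hx.1
      rw [this]; ring⟩
  · refine ⟨(ℓ v - ℓ u) / (v - u), ℓ u - (ℓ v - ℓ u) / (v - u) * u, fun x hx => ?_⟩
    have hvu : (0:ℝ) < v - u := by linarith
    set r := (x - u) / (v - u) with hr
    have hr0 : 0 ≤ r := div_nonneg (by linarith [hx.1]) hvu.le
    have hr1 : r ≤ 1 := by rw [hr, div_le_one hvu]; linarith [hx.2]
    have hx_eq : (1 - r) * u + r * v = x := by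
      rw [hr]; field_simp; ring
    have := h r ⟨hr0, hr1⟩
    rw [hx_eq] at this
    rw [this, hr]; field_simp; ring

lemma affOn_glue {a b c d : ℝ} (hab : a ≤ b) (hbc : b < c) (hcd : c ≤ d)
    (h1 : AffOn ℓ (Icc a c)) (h2 : AffOn ℓ (Icc b d)) : AffOn ℓ (Icc a d) := by
  obtain ⟨m1, q1, H1⟩ := h1
  obtain ⟨m2, q2, H2⟩ := h2
  have eb : m1 * b + q1 = m2 * b + q2 := by
    rw [← H1 b ⟨hab, hbc.le⟩, ← H2 b ⟨le_refl b, hbc.le.trans hcd⟩]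
  have ec : m1 * c + q1 = m2 * c + q2 := by
    rw [← H1 c ⟨hab.trans hbc.le, le_refl c⟩, ← H2 c ⟨hbc.le, hcd⟩]
  have hm : m1 = m2 := by
    have h := sub_ne_zero.mpr (ne_of_gt hbc)
    have : m1 * (c - b) = m2 * (c - b) := by linarith
    exact mul_right_cancel₀ h this
  have hq : q1 = q2 := by rw [hm] at eb; linarith
  refine ⟨m1, q1, fun x hx => ?_⟩
  rcases le_total x c with hxc | hcx
  · exact H1 x ⟨hx.1, hxc⟩
  · rw [H2 x ⟨hbc.le.trans hcx, hx.2⟩, hm, hq]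

lemma ray_affine {z α β : ℝ} (hα : 0 < α) (hαβ : α < β)
    (H : ∀ g : ℝ, 0 < g → AffOn ℓ (Icc (α * g + z) (β * g + z))) :
    ∃ m q : ℝ, ∀ x : ℝ, z < x → ℓ x = m * x + q := by
  have hβ : 0 < β := hα.trans hαβ
  set s : ℝ := (α + β) / (2 * α) with hs
  have hαs : α * s = (α + β) / 2 := by rw [hs]; field_simp
  have hs1 : 1 < s := by
    rw [hs, lt_div_iff₀ (by linarith)]; linarith
  have hs0 : (0:ℝ) < s := by linarith
  have claim : ∀ u v : ℝ, z < u → u < v → AffOn ℓ (Icc u v) := by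
    intro u v hzu huv
    set g0 : ℝ := (u - z) / α with hg0
    have hg0_pos : 0 < g0 := by rw [hg0]; exact div_pos (by linarith) hα
    have hg0_eq : α * g0 + z = u := by rw [hg0]; field_simp; ring
    have step : ∀ n : ℕ, AffOn ℓ (Icc u (β * (g0 * s ^ n) + z)) := by
      intro n
      induction n with
      | zero => simpa [hg0_eq] using H g0 hg0_pos
      | succ n ih =>
        have hsn1 : (1:ℝ) ≤ s ^ (n+1) := one_le_pow₀ hs1.le
        have hspn : (0:ℝ) < s ^ n := pow_pos hs0 n
        have hpos : 0 < g0 * s ^ (n + 1) := mul_pos hg0_pos (pow_pos hs0 _)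
        have hnext := H (g0 * s ^ (n + 1)) hpos
        refine affOn_glue ?_ ?_ ?_ ih hnext
        · rw [← hg0_eq]
          have h1 : g0 ≤ g0 * s ^ (n+1) := le_mul_of_one_le_right hg0_pos.le hsn1
          nlinarith
        · have e : α * (g0 * s ^ (n+1)) = (α * s) * (g0 * s ^ n) := by
            rw [pow_succ]; ring
          have h2 : (α * s) * (g0 * s ^ n) < β * (g0 * s ^ n) := by
            apply mul_lt_mul_of_pos_right _ (mul_pos hg0_pos hspn)
            rw [hαs]; linarith
          rw [e]; linarith
        · have e : β * (g0 * s ^ (n+1)) = (β * (g0 * s ^ n)) * s := by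
            rw [pow_succ]; ring
          have h3 : β * (g0 * s ^ n) ≤ (β * (g0 * s ^ n)) * s :=
            le_mul_of_one_le_right (mul_pos hβ (mul_pos hg0_pos hspn)).le hs1.le
          rw [e]; linarith
    have hβg0 : 0 < β * g0 := mul_pos hβ hg0_pos
    obtain ⟨n, hn⟩ := pow_unbounded_of_one_lt ((v - z) / (β * g0)) hs1
    have hv : v ≤ β * (g0 * s ^ n) + z := by
      rw [div_lt_iff₀ hβg0] at hn
      have : s ^ n * (β * g0) = β * (g0 * s ^ n) := by ring
      linarith
    exact (step n).mono (Icc_subset_Icc le_rfl hv)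
  obtain ⟨m, q, hmq⟩ := claim (z + 1) (z + 2) (by linarith) (by linarith)
  refine ⟨m, q, fun x hx => ?_⟩
  have hzu : z < min x (z + 1) := lt_min hx (by linarith)
  have huv : min x (z + 1) < max x (z + 2) := lt_of_le_of_lt (min_le_right _ _)
    (lt_of_lt_of_le (by linarith) (le_max_right _ _))
  obtain ⟨m', q', h'⟩ := claim (min x (z + 1)) (max x (z + 2)) hzu huv
  have e1 : m' * (z + 1) + q' = m * (z + 1) + q := by
    rw [← h' (z+1) ⟨min_le_right _ _, le_trans (by linarith) (le_max_right _ _)⟩,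
      hmq (z+1) ⟨le_refl _, by linarith⟩]
  have e2 : m' * (z + 2) + q' = m * (z + 2) + q := by
    rw [← h' (z+2) ⟨le_trans (min_le_right _ _) (by linarith), le_max_right _ _⟩,
      hmq (z+2) ⟨by linarith, le_refl _⟩]
  have hm : m' = m := by linarith
  have hq : q' = q := by rw [hm] at e1; linarith
  rw [h' x ⟨min_le_left _ _, le_max_left _ _⟩, hm, hq]

lemma convexOn_reflect (hℓ : ConvexOn ℝ Set.univ ℓ) (c : ℝ) :
    ConvexOn ℝ Set.univ (fun w => ℓ (c - w)) := by
  refine ⟨convex_univ, fun x _ y _ p q hp hq hpq => ?_⟩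
  have h := hℓ.2 (mem_univ (c - x)) (mem_univ (c - y)) hp hq hpq
  simp only [smul_eq_mul] at h ⊢
  have hc : c - (p * x + q * y) = p * (c - x) + q * (c - y) := by
    linear_combination (-c) * hpq
  rw [hc]; exact h

lemma global_affine {α β z : ℝ} (hα : 0 < α) (hαβ : α < β)
    (H : ∀ g : ℝ, ∀ r ∈ Icc (0:ℝ) 1,
      ℓ ((1 - r) * (α * g + z) + r * (β * g + z)) = (1 - r) * ℓ (α * g + z) + r * ℓ (β * g + z)) :
    (∃ m q : ℝ, ∀ x : ℝ, z < x → ℓ x = m * x + q) ∧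
    (∃ m q : ℝ, ∀ x : ℝ, x < z → ℓ x = m * x + q) := by
  constructor
  · apply ray_affine hα hαβ
    intro g hg
    exact affOn_of_qaff (by nlinarith) (H g)
  · have HL : ∀ g : ℝ, 0 < g → AffOn (fun w => ℓ (2 * z - w)) (Icc (α * g + z) (β * g + z)) := by
      intro g hg
      apply affOn_of_qaff (by nlinarith)
      intro r hr
      have h1 : 2 * z - ((1 - r) * (α * g + z) + r * (β * g + z))
          = (1 - r) * (α * (-g) + z) + r * (β * (-g) + z) := by ring
      have h2 : 2 * z - (α * g + z) = α * (-g) + z := by ring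
      have h3 : 2 * z - (β * g + z) = β * (-g) + z := by ring
      simp only [h1, h2, h3]
      exact H (-g) r hr
    obtain ⟨m, q, hmq⟩ := ray_affine (ℓ := fun w => ℓ (2 * z - w)) hα hαβ HL
    refine ⟨-m, 2 * m * z + q, fun x hx => ?_⟩
    have h4 := hmq (2 * z - x) (by linarith)
    simp only [show 2 * z - (2 * z - x) = x by ring] at h4
    rw [h4]; ring

lemma ell_global_contradiction (hℓ0 : ℓ 0 = 0) (hℓnn : ∀ x : ℝ, 0 ≤ ℓ x)
    (hℓpos : ∃ xp : ℝ, 0 < xp ∧ 0 < ℓ xp) {α β z₁ z₂ : ℝ} (hα : 0 < α) (hαβ : α < β)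
    (hz : z₁ < z₂)
    (H1 : ∀ g : ℝ, ∀ r ∈ Icc (0:ℝ) 1,
      ℓ ((1 - r) * (α * g + z₁) + r * (β * g + z₁))
        = (1 - r) * ℓ (α * g + z₁) + r * ℓ (β * g + z₁))
    (H2 : ∀ g : ℝ, ∀ r ∈ Icc (0:ℝ) 1,
      ℓ ((1 - r) * (α * g + z₂) + r * (β * g + z₂))
        = (1 - r) * ℓ (α * g + z₂) + r * ℓ (β * g + z₂)) : False := by
  obtain ⟨m1, q1, hray1⟩ := (global_affine hα hαβ H1).1
  obtain ⟨m2, q2, hray2⟩ := (global_affine hα hαβ H2).2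
  obtain ⟨p1, p2, hp1a, hp12, hp2b⟩ :
      ∃ p1 p2 : ℝ, z₁ < p1 ∧ p1 < p2 ∧ p2 < z₂ :=
    ⟨z₁ + (z₂ - z₁) / 3, z₁ + 2 * (z₂ - z₁) / 3, by linarith, by linarith, by linarith⟩
  have e1 : m1 * p1 + q1 = m2 * p1 + q2 := by
    rw [← hray1 p1 hp1a, hray2 p1 (by linarith)]
  have e2 : m1 * p2 + q1 = m2 * p2 + q2 := by
    rw [← hray1 p2 (by linarith), hray2 p2 hp2b]
  have hm : m1 = m2 := by
    have h := sub_ne_zero.mpr (ne_of_gt hp12)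
    have : m1 * (p2 - p1) = m2 * (p2 - p1) := by linarith
    exact mul_right_cancel₀ h this
  have hq : q1 = q2 := by rw [hm] at e1; linarith
  have hall : ∀ x : ℝ, ℓ x = m1 * x + q1 := by
    intro x
    rcases lt_or_ge z₁ x with h | h
    · exact hray1 x h
    · rw [hray2 x (lt_of_le_of_lt h hz), hm, hq]
  obtain ⟨xp, hxp, hℓxp⟩ := hℓpos
  have h0 := hall 0
  rw [hℓ0] at h0
  have hq0 : q1 = 0 := by linarith
  have hpos := hall xp
  have hneg := hall (-xp)
  have := hℓnn (-xp)
  rw [hq0] at hpos hneg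
  nlinarith
end Part2

section Part3

lemma gaussian_ae_all {S : Set ℝ} (hS : IsClosed S)
    (h : ∀ᵐ x ∂(gaussianReal 0 1), x ∈ S) : ∀ x : ℝ, x ∈ S := by
  by_contra hc
  push_neg at hc
  obtain ⟨x0, hx0⟩ := hc
  have hU : IsOpen Sᶜ := hS.isOpen_compl
  have h0 : (gaussianReal 0 1) Sᶜ = 0 := by
    rw [ae_iff] at h; exact h
  rw [gaussianReal_of_var_ne_zero 0 one_ne_zero,
    withDensity_apply _ hU.measurableSet,
    setLIntegral_eq_zero_iff hU.measurableSet (measurable_gaussianPDF 0 1)] at h0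
  have hvol : (volume : Measure ℝ) Sᶜ = 0 := by
    have hae : ∀ᵐ x : ℝ, x ∉ Sᶜ := by
      filter_upwards [h0] with x hx
      intro hxU
      exact (gaussianPDF_pos 0 one_ne_zero x).ne' (hx hxU)
    have := ae_iff.mp hae; simp at this; exact this
  exact absurd hvol (hU.measure_pos volume ⟨x0, hx0⟩).ne'

lemma integrable_sq_gaussianReal : Integrable (fun x : ℝ => x ^ 2) (gaussianReal 0 1) := by
  rw [gaussianReal_of_var_ne_zero 0 one_ne_zero,
    integrable_withDensity_iff (measurable_gaussianPDF 0 1)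
      (ae_of_all _ fun x => ENNReal.ofReal_lt_top)]
  have key : Integrable (fun x : ℝ => x ^ 2 * Real.exp (-(1/2) * x ^ 2)) volume := by
    have h := integrable_rpow_mul_exp_neg_mul_sq (b := 1/2) (by norm_num) (s := 2) (by norm_num)
    have h2 : ∀ x : ℝ, x ^ (2:ℝ) = x ^ 2 := fun x => Real.rpow_two x
    simpa only [h2] using h
  apply Integrable.mono' (key.const_mul ((Real.sqrt (2 * Real.pi))⁻¹))
  · apply Measurable.aestronglyMeasurable
    exact (measurable_id.pow_const 2).mul (measurable_gaussianPDF 0 1).ennreal_toReal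
  · refine ae_of_all _ fun x => ?_
    rw [Real.norm_eq_abs,
      abs_of_nonneg (mul_nonneg (sq_nonneg x) ENNReal.toReal_nonneg)]
    rw [show gaussianPDF 0 1 x = ENNReal.ofReal (gaussianPDFReal 0 1 x) from rfl,
      ENNReal.toReal_ofReal (gaussianPDFReal_nonneg 0 1 x), gaussianPDFReal_def]
    refine le_of_eq ?_
    push_cast
    rw [show -(x - 0)^2 / (2*(1:ℝ)) = -(1/2) * x^2 by ring]
    ring

end Part3

/-- **Strict convexity of the expected loss** -/
theorem expected_loss_strictConvex
    {Ω : Type*} [MeasurableSpace Ω] (μ : Measure Ω) [IsProbabilityMeasure μ]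
    (G Z : Ω → ℝ) (hGmeas : Measurable G) (hZmeas : Measurable Z)
    (hGauss : Measure.map G μ = gaussianReal 0 1)
    (hIndep : IndepFun G Z μ)
    (hZnc : ¬ ∃ c : ℝ, ∀ᵐ ω ∂μ, Z ω = c)
    (ℓ : ℝ → ℝ) (hℓ : ConvexOn ℝ Set.univ ℓ)
    (hℓ0 : ℓ 0 = 0) (hℓnn : ∀ x : ℝ, 0 ≤ ℓ x)
    (hℓpos : ∃ xp : ℝ, 0 < xp ∧ 0 < ℓ xp)
    -- Assumption (A)
    (hA : ∀ c : ℝ, Integrable (fun ω => (maxAbsSubgrad ℓ (c * G ω + Z ω)) ^ 2) μ) :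
    (∀ α : ℝ, Integrable (fun ω => ℓ (α * G ω + Z ω) - ℓ (Z ω)) μ) ∧
    StrictConvexOn ℝ (Ioi (0 : ℝ))
      (fun α => ∫ ω, (ℓ (α * G ω + Z ω) - ℓ (Z ω)) ∂μ) := by
  have hℓcont : Continuous ℓ := by
    rw [← continuousOn_univ]
    exact hℓ.continuousOn isOpen_univ
  have hMnn : ∀ v, 0 ≤ maxAbsSubgrad ℓ v := maxAbsSubgrad_nonneg hℓ
  -- L² facts
  have hG2 : MemLp G 2 μ := by
    rw [memLp_two_iff_integrable_sq hGmeas.aestronglyMeasurable]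
    have h1 : Integrable (fun x : ℝ => x ^ 2) (Measure.map G μ) :=
      hGauss ▸ integrable_sq_gaussianReal
    have h2 := (integrable_map_measure
      ((continuous_pow 2).measurable.aestronglyMeasurable) hGmeas.aemeasurable).mp h1
    exact h2
  have hM2 : ∀ c : ℝ, MemLp (fun ω => maxAbsSubgrad ℓ (c * G ω + Z ω)) 2 μ := by
    intro c
    have hint := hA c
    have haesm : AEStronglyMeasurable (fun ω => maxAbsSubgrad ℓ (c * G ω + Z ω)) μ := by
      have h1 : AEStronglyMeasurable
          (fun ω => (maxAbsSubgrad ℓ (c * G ω + Z ω)) ^ 2) μ := hint.aestronglyMeasurable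
      have h2 := Real.continuous_sqrt.comp_aestronglyMeasurable h1
      refine h2.congr (ae_of_all _ fun ω => ?_)
      exact Real.sqrt_sq (hMnn _)
    rw [memLp_two_iff_integrable_sq haesm]
    exact hint
  have hmul : ∀ (f g : Ω → ℝ), MemLp f 2 μ → MemLp g 2 μ →
      Integrable (fun ω => f ω * g ω) μ := by
    intro f g hf hg
    have h := hg.smul (φ := f) (p := 2) (q := 2) (r := 1) hf
      (hpqr := ⟨by rw [inv_one, ENNReal.inv_two_add_inv_two]⟩)
    rw [memLp_one_iff_integrable] at h
    exact h
  -- integrability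
  have hInt : ∀ α : ℝ, Integrable (fun ω => ℓ (α * G ω + Z ω) - ℓ (Z ω)) μ := by
    intro α
    have hmeas : AEStronglyMeasurable (fun ω => ℓ (α * G ω + Z ω) - ℓ (Z ω)) μ :=
      ((hℓcont.measurable.comp ((hGmeas.const_mul α).add hZmeas)).sub
        (hℓcont.measurable.comp hZmeas)).aestronglyMeasurable
    have habs : MemLp (fun ω => |α * G ω|) 2 μ := by
      have := (hG2.const_mul α).norm
      simpa [Real.norm_eq_abs, abs_mul] using this
    have hM0 : MemLp (fun ω => maxAbsSubgrad ℓ (Z ω)) 2 μ := by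
      have := hM2 0
      simpa using this
    have h1 : Integrable (fun ω => maxAbsSubgrad ℓ (α * G ω + Z ω) * |α * G ω|) μ :=
      hmul _ _ (hM2 α) habs
    have h2 : Integrable (fun ω => maxAbsSubgrad ℓ (Z ω) * |α * G ω|) μ :=
      hmul _ _ hM0 habs
    refine Integrable.mono' (h1.add h2) hmeas (ae_of_all _ fun ω => ?_)
    simp only [Pi.add_apply]
    rw [Real.norm_eq_abs]
    have hb := abs_loss_sub_le hℓ (α * G ω + Z ω) (Z ω)
    rw [show α * G ω + Z ω - Z ω = α * G ω by ring] at hb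
    have := abs_nonneg (α * G ω)
    nlinarith [hMnn (α * G ω + Z ω), hMnn (Z ω)]
  refine ⟨hInt, ?_⟩
  -- notation
  set F := fun α : ℝ => ∫ ω, (ℓ (α * G ω + Z ω) - ℓ (Z ω)) ∂μ with hF
  have hpt : ∀ (x y t s : ℝ), 0 ≤ t → 0 ≤ s → t + s = 1 → ∀ ω : Ω,
      ℓ ((t * x + s * y) * G ω + Z ω) - ℓ (Z ω) ≤
        t * (ℓ (x * G ω + Z ω) - ℓ (Z ω)) + s * (ℓ (y * G ω + Z ω) - ℓ (Z ω)) := by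
    intro x y t s ht hs hts ω
    have hcomb : (t * x + s * y) * G ω + Z ω
        = t * (x * G ω + Z ω) + s * (y * G ω + Z ω) := by
      linear_combination (-(Z ω)) * hts
    have hcv := hℓ.2 (mem_univ (x * G ω + Z ω)) (mem_univ (y * G ω + Z ω)) ht hs hts
    simp only [smul_eq_mul] at hcv
    rw [hcomb]
    have h2 : t * (ℓ (x * G ω + Z ω) - ℓ (Z ω)) + s * (ℓ (y * G ω + Z ω) - ℓ (Z ω))
        = t * ℓ (x * G ω + Z ω) + s * ℓ (y * G ω + Z ω) - ℓ (Z ω) := by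
      linear_combination (-(ℓ (Z ω))) * hts
    linarith
  have hFle : ∀ (x y t s : ℝ), 0 ≤ t → 0 ≤ s → t + s = 1 →
      F (t * x + s * y) ≤ t * F x + s * F y := by
    intro x y t s ht hs hts
    have hint2 : Integrable (fun ω => t * (ℓ (x * G ω + Z ω) - ℓ (Z ω))
        + s * (ℓ (y * G ω + Z ω) - ℓ (Z ω))) μ :=
      ((hInt x).const_mul t).add ((hInt y).const_mul s)
    calc F (t * x + s * y)
        ≤ ∫ ω, (t * (ℓ (x * G ω + Z ω) - ℓ (Z ω))
            + s * (ℓ (y * G ω + Z ω) - ℓ (Z ω))) ∂μ :=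
          integral_mono (hInt _) hint2 (hpt x y t s ht hs hts)
      _ = t * F x + s * F y := by
          rw [integral_add ((hInt x).const_mul t) ((hInt y).const_mul s),
            integral_const_mul, integral_const_mul]
  have main : ∀ x y : ℝ, 0 < x → x < y → ∀ t s : ℝ, 0 < t → 0 < s → t + s = 1 →
      F (t * x + s * y) < t * F x + s * F y := by
    intro x y hx hxy t s ht hs hts
    rcases lt_or_eq_of_le (hFle x y t s ht.le hs.le hts) with hlt | heqF
    · exact hlt
    exfalso
    -- the nonnegative integrand with zero integral
    have hnn : 0 ≤ fun ω => t * (ℓ (x * G ω + Z ω) - ℓ (Z ω))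
        + s * (ℓ (y * G ω + Z ω) - ℓ (Z ω)) - (ℓ ((t * x + s * y) * G ω + Z ω) - ℓ (Z ω)) := by
      intro ω
      have := hpt x y t s ht.le hs.le hts ω
      simp only [Pi.zero_apply]
      linarith
    have hint3 : Integrable (fun ω => t * (ℓ (x * G ω + Z ω) - ℓ (Z ω))
        + s * (ℓ (y * G ω + Z ω) - ℓ (Z ω))
        - (ℓ ((t * x + s * y) * G ω + Z ω) - ℓ (Z ω))) μ :=
      (((hInt x).const_mul t).add ((hInt y).const_mul s)).sub (hInt _)
    have hzero : ∫ ω, (t * (ℓ (x * G ω + Z ω) - ℓ (Z ω))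
        + s * (ℓ (y * G ω + Z ω) - ℓ (Z ω))
        - (ℓ ((t * x + s * y) * G ω + Z ω) - ℓ (Z ω))) ∂μ = 0 := by
      have ha' : Integrable (fun ω => t * (ℓ (x * G ω + Z ω) - ℓ (Z ω))) μ := by
        exact (hInt x).const_mul t
      have hb' : Integrable (fun ω => s * (ℓ (y * G ω + Z ω) - ℓ (Z ω))) μ := by
        exact (hInt y).const_mul s
      have hab' : Integrable (fun ω => t * (ℓ (x * G ω + Z ω) - ℓ (Z ω))
          + s * (ℓ (y * G ω + Z ω) - ℓ (Z ω))) μ := by exact ha'.add hb'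
      rw [integral_sub hab' (hInt _), integral_add ha' hb',
        integral_const_mul, integral_const_mul]
      have : F (t * x + s * y) = t * F x + s * F y := heqF
      rw [hF] at this
      linarith [this]
    have hae := (integral_eq_zero_iff_of_nonneg hnn hint3).mp hzero
    -- the closed set D
    set D : Set (ℝ × ℝ) := {p : ℝ × ℝ | ∀ r ∈ Icc (0:ℝ) 1,
      ℓ ((1 - r) * (x * p.1 + p.2) + r * (y * p.1 + p.2))
        = (1 - r) * ℓ (x * p.1 + p.2) + r * ℓ (y * p.1 + p.2)} with hD
    have hDclosed : IsClosed D := by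
      have hrw : D = ⋂ r ∈ Icc (0:ℝ) 1, {p : ℝ × ℝ |
          ℓ ((1 - r) * (x * p.1 + p.2) + r * (y * p.1 + p.2))
            = (1 - r) * ℓ (x * p.1 + p.2) + r * ℓ (y * p.1 + p.2)} := by
        ext p
        simp only [hD, mem_setOf_eq, mem_iInter]
      rw [hrw]
      refine isClosed_biInter fun r hr => isClosed_eq ?_ ?_
      · have c1 : Continuous fun p : ℝ × ℝ =>
            (1 - r) * (x * p.1 + p.2) + r * (y * p.1 + p.2) :=
          (continuous_const.mul ((continuous_const.mul continuous_fst).add continuous_snd)).add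
            (continuous_const.mul ((continuous_const.mul continuous_fst).add continuous_snd))
        exact hℓcont.comp c1
      · have c2 : Continuous fun p : ℝ × ℝ => ℓ (x * p.1 + p.2) :=
          hℓcont.comp ((continuous_const.mul continuous_fst).add continuous_snd)
        have c3 : Continuous fun p : ℝ × ℝ => ℓ (y * p.1 + p.2) :=
          hℓcont.comp ((continuous_const.mul continuous_fst).add continuous_snd)
        exact ((continuous_const.mul c2).add (continuous_const.mul c3))
    have hDmeas : MeasurableSet D := hDclosed.measurableSet
    -- a.e. ω, (G ω, Z ω) ∈ D
    have hDae : ∀ᵐ ω ∂μ, (G ω, Z ω) ∈ D := by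
      filter_upwards [hae] with ω hω
      simp only [Pi.zero_apply] at hω
      have heq : ℓ (t * (x * G ω + Z ω) + s * (y * G ω + Z ω))
          = t * ℓ (x * G ω + Z ω) + s * ℓ (y * G ω + Z ω) := by
        have hcomb : (t * x + s * y) * G ω + Z ω
            = t * (x * G ω + Z ω) + s * (y * G ω + Z ω) := by
          linear_combination (-(Z ω)) * hts
        rw [← hcomb]
        linear_combination -hω - ℓ (Z ω) * hts
      exact eq_on_segment hℓ ht hs hts heq
    -- push to the joint law
    have hmap : Measure.map (fun ω => (G ω, Z ω)) μ
        = (gaussianReal 0 1).prod (Measure.map Z μ) := by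
      rw [← hGauss]
      exact (indepFun_iff_map_prod_eq_prod_map_map hGmeas.aemeasurable
        hZmeas.aemeasurable).mp hIndep
    have hprodae : ∀ᵐ p ∂((gaussianReal 0 1).prod (Measure.map Z μ)), p ∈ D := by
      rw [← hmap]
      exact (ae_map_iff (hGmeas.prodMk hZmeas).aemeasurable hDmeas).mpr hDae
    haveI : IsProbabilityMeasure (Measure.map Z μ) :=
      Measure.isProbabilityMeasure_map hZmeas.aemeasurable
    -- Fubini / swap
    have h1 : ((gaussianReal 0 1).prod (Measure.map Z μ)) Dᶜ = 0 := by
      rw [ae_iff] at hprodae; exact hprodae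
    have h2 : ((Measure.map Z μ).prod (gaussianReal 0 1)) (Prod.swap ⁻¹' Dᶜ) = 0 := by
      have hsw := Measure.prod_swap (μ := Measure.map Z μ) (ν := gaussianReal 0 1)
      rw [← hsw, Measure.map_apply measurable_swap hDmeas.compl] at h1
      exact h1
    have h3 := (Measure.measure_prod_null (hDmeas.compl.preimage measurable_swap)).mp h2
    have hSae : ∀ᵐ z ∂(Measure.map Z μ), ∀ g : ℝ, (g, z) ∈ D := by
      filter_upwards [h3] with z hz
      have hzero' : (gaussianReal 0 1) {g : ℝ | (g, z) ∈ Dᶜ} = 0 := hz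
      have hgae : ∀ᵐ g ∂(gaussianReal 0 1), g ∈ {g : ℝ | (g, z) ∈ D} := by
        rw [ae_iff]
        exact hzero'
      have hclosed : IsClosed {g : ℝ | (g, z) ∈ D} :=
        hDclosed.preimage (continuous_id.prodMk continuous_const)
      exact gaussian_ae_all hclosed hgae
    -- two distinct points
    have hexists : ∃ z₁ z₂ : ℝ, (∀ g : ℝ, (g, z₁) ∈ D) ∧ (∀ g : ℝ, (g, z₂) ∈ D) ∧ z₁ ≠ z₂ := by
      by_contra hcon
      push_neg at hcon
      obtain ⟨z0, hz0⟩ := hSae.exists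
      have hconst : ∀ᵐ z ∂(Measure.map Z μ), z = z0 :=
        hSae.mono fun z hz => hcon z z0 hz hz0
      rw [ae_map_iff hZmeas.aemeasurable (measurableSet_eq (a := z0))] at hconst
      exact hZnc ⟨z0, hconst⟩
    obtain ⟨z₁, z₂, hz₁, hz₂, hne⟩ := hexists
    rcases lt_or_gt_of_ne hne with hlt | hlt
    · exact ell_global_contradiction hℓ0 hℓnn hℓpos hx hxy hlt
        (fun g => hz₁ g) (fun g => hz₂ g)
    · exact ell_global_contradiction hℓ0 hℓnn hℓpos hx hxy hlt
        (fun g => hz₂ g) (fun g => hz₁ g)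
  refine ⟨convex_Ioi 0, ?_⟩
  intro x hx y hy hxy t s ht hs hts
  simp only [smul_eq_mul]
  rcases lt_or_gt_of_ne hxy with h | h
  · exact main x y hx h t s ht hs hts
  · have hmm := main y x hy h s t hs ht (by linarith)
    rw [show t * x + s * y = s * y + t * x by ring]
    linarith
end

section
/- Auxiliary rigidity lemma for proximal maps at two noise levels: Let ℓ : ℝ → ℝ be convex, let α ≠ 0, τ > 0, and let x ∈ ℝ, y > −τ with (x, y) ≠ (0, 0). For χ ∈ ℝ and t > 0 write v_{χ,t} := prox_ℓ(χ; t) and ℓ'_{χ,t} := (χ − v_{χ,t})/t. Let Z₀ ≠ Z₁ be real numbers, let J ⊆ ℝ be nonempty, and suppose the sets G_{Z_i} := { G ∈ ℝ : v_{αG+Z_i, τ} ∈ J } (i = 0, 1) each contain at least two elements. Assume further that for i = 0, 1 and all G, G' ∈ G_{Z_i}: ℓ'_{αG+Z_i, τ} = ℓ'_{αG'+Z_i, τ} implies v_{αG+Z_i, τ} = v_{αG'+Z_i, τ}. Then it cannot hold that for all i ∈ {0,1} and all G ∈ G_{Z_i}: v_{αG+Z_i, τ} = v_{(α+x)G+Z_i,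 τ+y} and ℓ'_{αG+Z_i, τ} = ℓ'_{(α+x)G+Z_i, τ+y}. -/
open Set

/-- A convex function `ℝ → ℝ` has a subgradient at every point. -/
lemma exists_subgradient_of_convexOn (ℓ : ℝ → ℝ) (hℓ : ConvexOn ℝ Set.univ ℓ) (w : ℝ) :
    ∃ s : ℝ, ∀ u : ℝ, ℓ w + s * (u - w) ≤ ℓ u := by
  set T : Set ℝ := {r : ℝ | ∃ t : ℝ, w < t ∧ r = (ℓ t - ℓ w) / (t - w)} with hT
  have hne : T.Nonempty := ⟨(ℓ (w + 1) - ℓ w) / (w + 1 - w), w + 1, by linarith, rfl⟩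
  have hbdd : BddBelow T := by
    refine ⟨(ℓ w - ℓ (w - 1)) / (w - (w - 1)), ?_⟩
    rintro r ⟨t, ht, rfl⟩
    exact hℓ.slope_mono_adjacent (Set.mem_univ _) (Set.mem_univ _) (by linarith) ht
  refine ⟨sInf T, fun u => ?_⟩
  rcases lt_trichotomy u w with h | h | h
  · have hle : (ℓ w - ℓ u) / (w - u) ≤ sInf T := by
      refine le_csInf hne ?_
      rintro r ⟨t, ht, rfl⟩
      exact hℓ.slope_mono_adjacent (Set.mem_univ _) (Set.mem_univ _) h ht
    have hwu : (0:ℝ) < w - u := by linarith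
    rw [div_le_iff₀ hwu] at hle
    nlinarith [hle]
  · simp [h]
  · have hle : sInf T ≤ (ℓ u - ℓ w) / (u - w) := csInf_le hbdd ⟨u, h, rfl⟩
    have hwu : (0:ℝ) < u - w := by linarith
    rw [le_div_iff₀ hwu] at hle
    linarith

/-- If `s` is a subgradient of `ℓ` at `w`, then the prox of `w + τ s` at level `τ` is `w`. -/
lemma prox_of_subgradient (ℓ : ℝ → ℝ) (P : ℝ → ℝ → ℝ)
    (hP : ∀ (a b : ℝ), 0 < b → ∀ v : ℝ, v ≠ P a b →
      (a - P a b) ^ 2 / (2 * b) + ℓ (P a b) < (a - v) ^ 2 / (2 * b) + ℓ v)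
    (τ : ℝ) (hτ : 0 < τ) (w s : ℝ) (hs : ∀ u : ℝ, ℓ w + s * (u - w) ≤ ℓ u) :
    P (w + τ * s) τ = w := by
  by_contra h
  have h2 := hP (w + τ * s) τ hτ w (Ne.symm h)
  set v := P (w + τ * s) τ
  have h3 := hs v
  have hτ' : (0:ℝ) < 2 * τ := by linarith
  have h2' : (w + τ * s - v) ^ 2 + 2 * τ * ℓ v < (w + τ * s - w) ^ 2 + 2 * τ * ℓ w := by
    have := mul_lt_mul_of_pos_left h2 hτ'
    field_simp at this
    linarith [this]
  nlinarith [sq_nonneg (w - v), h2', h3, hτ]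

/-- **Auxiliary rigidity lemma for proximal maps at two noise levels**: with
`v_{χ,t} = prox_ℓ(χ;t)` and `ℓ'_{χ,t} = (χ − v_{χ,t})/t`, if `α ≠ 0`, `τ > 0`,
`(x,y) ≠ (0,0)` with `y > −τ`, `Z₀ ≠ Z₁`, and the sets
`G_{Z_i} = {G : v_{αG+Z_i,τ} ∈ J}` each contain at least two elements and satisfy the
stated injectivity-type implication, then the proximal map and slope cannot agree at the
two parameter levels `(α,τ)` and `(α+x, τ+y)` on all of `G_{Z₀} ∪ G_{Z₁}`. -/
theorem prox_rigidity_two_noise_levels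
    (ℓ : ℝ → ℝ) (hℓ : ConvexOn ℝ Set.univ ℓ)
    (P : ℝ → ℝ → ℝ)
    (hP : ∀ (a b : ℝ), 0 < b → ∀ v : ℝ, v ≠ P a b →
      (a - P a b) ^ 2 / (2 * b) + ℓ (P a b) < (a - v) ^ 2 / (2 * b) + ℓ v)
    (α : ℝ) (hα : α ≠ 0) (τ : ℝ) (hτ : 0 < τ)
    (x y : ℝ) (hy : -τ < y) (hxy : (x, y) ≠ ((0 : ℝ), (0 : ℝ)))
    (Z₀ Z₁ : ℝ) (hZ : Z₀ ≠ Z₁)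
    (J : Set ℝ) (hJ : J.Nonempty)
    (S₀ S₁ : Set ℝ)
    (hS₀ : S₀ = {g : ℝ | P (α * g + Z₀) τ ∈ J})
    (hS₁ : S₁ = {g : ℝ | P (α * g + Z₁) τ ∈ J})
    (hS₀two : ∃ a ∈ S₀, ∃ b ∈ S₀, a ≠ b)
    (hS₁two : ∃ a ∈ S₁, ∃ b ∈ S₁, a ≠ b)
    (hinj₀ : ∀ g ∈ S₀, ∀ g' ∈ S₀,
      (α * g + Z₀ - P (α * g + Z₀) τ) / τ = (α * g' + Z₀ - P (α * g' + Z₀) τ) / τ →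
      P (α * g + Z₀) τ = P (α * g' + Z₀) τ)
    (hinj₁ : ∀ g ∈ S₁, ∀ g' ∈ S₁,
      (α * g + Z₁ - P (α * g + Z₁) τ) / τ = (α * g' + Z₁ - P (α * g' + Z₁) τ) / τ →
      P (α * g + Z₁) τ = P (α * g' + Z₁) τ) :
    ¬ ((∀ g ∈ S₀,
          P (α * g + Z₀) τ = P ((α + x) * g + Z₀) (τ + y) ∧
          (α * g + Z₀ - P (α * g + Z₀) τ) / τ =
            ((α + x) * g + Z₀ - P ((α + x) * g + Z₀) (τ + y)) / (τ + y)) ∧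
        (∀ g ∈ S₁,
          P (α * g + Z₁) τ = P ((α + x) * g + Z₁) (τ + y) ∧
          (α * g + Z₁ - P (α * g + Z₁) τ) / τ =
            ((α + x) * g + Z₁ - P ((α + x) * g + Z₁) (τ + y)) / (τ + y))) := by
  rintro ⟨h0, h1⟩
  have hτ0 : τ ≠ 0 := ne_of_gt hτ
  have hτy : τ + y ≠ 0 := by intro h; linarith [hy]
  -- key relation: for any noise level Z and g where the agreement holds
  have key : ∀ Z g : ℝ,
      P (α * g + Z) τ = P ((α + x) * g + Z) (τ + y) →
      (α * g + Z - P (α * g + Z) τ) / τ =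
        ((α + x) * g + Z - P ((α + x) * g + Z) (τ + y)) / (τ + y) →
      g * (α * y - τ * x) = y * (P (α * g + Z) τ - Z) := by
    intro Z g hv hs
    rw [← hv] at hs
    set v := P (α * g + Z) τ with hvdef
    have hs' : (α * g + Z - v) * (τ + y) = ((α + x) * g + Z - v) * τ := by
      field_simp at hs
      linarith [hs]
    linear_combination hs'
  -- pick a point of J and a subgradient there; get points of S₀ and S₁ mapping to it
  obtain ⟨w, hw⟩ := hJ
  obtain ⟨s, hsub⟩ := exists_subgradient_of_convexOn ℓ hℓ w
  have hprox : P (w + τ * s) τ = w := prox_of_subgradient ℓ P hP τ hτ w s hsub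
  set g₀ : ℝ := (w + τ * s - Z₀) / α with hg₀def
  set g₁ : ℝ := (w + τ * s - Z₁) / α with hg₁def
  have hA0 : α * g₀ + Z₀ = w + τ * s := by rw [hg₀def, mul_div_cancel₀ _ hα]; ring
  have hA1 : α * g₁ + Z₁ = w + τ * s := by rw [hg₁def, mul_div_cancel₀ _ hα]; ring
  have hp0 : P (α * g₀ + Z₀) τ = w := by rw [hA0]; exact hprox
  have hp1 : P (α * g₁ + Z₁) τ = w := by rw [hA1]; exact hprox
  have hm0 : g₀ ∈ S₀ := by rw [hS₀]; simpa [hp0] using hw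
  have hm1 : g₁ ∈ S₁ := by rw [hS₁]; simpa [hp1] using hw
  have E0 : g₀ * (α * y - τ * x) = y * (w - Z₀) := by
    have := key Z₀ g₀ (h0 g₀ hm0).1 (h0 g₀ hm0).2
    rwa [hp0] at this
  have E1 : g₁ * (α * y - τ * x) = y * (w - Z₁) := by
    have := key Z₁ g₁ (h1 g₁ hm1).1 (h1 g₁ hm1).2
    rwa [hp1] at this
  -- deduce x = 0
  have hA0' : α * g₀ = w + τ * s - Z₀ := by linarith [hA0]
  have hA1' : α * g₁ = w + τ * s - Z₁ := by linarith [hA1]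
  have hxz : (Z₁ - Z₀) * (τ * x) = 0 := by
    linear_combination -α * E0 + α * E1 + (α * y - τ * x) * hA0' - (α * y - τ * x) * hA1'
  have hx : x = 0 := by
    have hd : Z₁ - Z₀ ≠ 0 := sub_ne_zero.mpr (Ne.symm hZ)
    rcases mul_eq_zero.mp hxz with h | h
    · exact absurd h hd
    · rcases mul_eq_zero.mp h with h' | h'
      · exact absurd h' hτ0
      · exact h'
  subst hx
  have hy0 : y ≠ 0 := by
    intro h; subst h; exact hxy rfl
  -- now use the two points of S₀
  obtain ⟨g, hg, g', hg', hne⟩ := hS₀two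
  have val : ∀ u ∈ S₀, P (α * u + Z₀) τ = Z₀ + α * u := by
    intro u hu
    have E := key Z₀ u (h0 u hu).1 (h0 u hu).2
    have h' : y * (P (α * u + Z₀) τ - (Z₀ + α * u)) = 0 := by linear_combination -E
    rcases mul_eq_zero.mp h' with h'' | h''
    · exact absurd h'' hy0
    · linarith [h'']
  have hslope : (α * g + Z₀ - P (α * g + Z₀) τ) / τ
      = (α * g' + Z₀ - P (α * g' + Z₀) τ) / τ := by
    rw [val g hg, val g' hg']; ring
  have := hinj₀ g hg g' hg' hslope
  rw [val g hg, val g' hg'] at this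
  exact hne (mul_left_cancel₀ hα (by linarith [this]))
end

section
/- Degeneracy of the scalar optimization at β = 0: Let f : ℝ → ℝ be convex and attain its minimum, let λ > 0, and let X₀ be a real-valued random variable with E[ f(X₀) ] < ∞ and E[ X₀² ] < ∞. For α > 0 define O(α) := sup_{τ>0} [ − ατ/2 + λ · E[ e_f(X₀; αλ/τ) − f(X₀) ] ], and set O(0) := 0. Then inf_{α ≥ 0} O(α) = lim_{α → +∞} O(α) = λ · E[ min_v f(v) − f(X₀) ]; in particular, the infimum is approached along α → +∞, so the set of minimizing sequences is unbounded. -/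
open MeasureTheory Set Filter

/-- **Degeneracy of the scalar optimization at `β = 0`**: for convex `f` attaining its
minimum, `λ > 0`, and `X₀` with `E[f(X₀)] < ∞`, `E[X₀²] < ∞`, the function
`O(α) = sup_{τ>0} [−ατ/2 + λ·E(e_f(X₀; αλ/τ) − f(X₀))]` for `α > 0`, `O(0) = 0`,
satisfies `inf_{α≥0} O(α) = lim_{α→+∞} O(α) = λ·E[min f − f(X₀)]`; in particular the
infimum is approached along `α → +∞`. -/
theorem scalar_optimization_beta_zero_degenerate
    {Ω : Type*} [MeasurableSpace Ω] (μ : Measure Ω) [IsProbabilityMeasure μ]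
    (f : ℝ → ℝ) (hf : ConvexOn ℝ Set.univ f)
    (v₀ : ℝ) (hv₀ : ∀ v : ℝ, f v₀ ≤ f v)
    (lam : ℝ) (hlam : 0 < lam)
    (X₀ : Ω → ℝ) (hX₀meas : Measurable X₀)
    (hfX₀ : Integrable (fun ω => f (X₀ ω)) μ)
    (hX₀sq : Integrable (fun ω => (X₀ ω) ^ 2) μ)
    (P : ℝ → ℝ → ℝ)
    (hP : ∀ (a b : ℝ), 0 < b → ∀ v : ℝ, v ≠ P a b →
      (a - P a b) ^ 2 / (2 * b) + f (P a b) < (a - v) ^ 2 / (2 * b) + f v)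
    (e : ℝ → ℝ → ℝ)
    (he : ∀ χ t : ℝ, e χ t = (χ - P χ t) ^ 2 / (2 * t) + f (P χ t))
    (O : ℝ → ℝ) (hO0 : O 0 = 0)
    (hOpos : ∀ α : ℝ, 0 < α →
      O α = sSup ((fun τ =>
        -(α * τ) / 2 + lam * ∫ ω, (e (X₀ ω) (α * lam / τ) - f (X₀ ω)) ∂μ) '' Ioi (0 : ℝ))) :
    sInf (O '' Ici (0 : ℝ)) = lam * ∫ ω, (f v₀ - f (X₀ ω)) ∂μ ∧
    Tendsto O atTop (nhds (lam * ∫ ω, (f v₀ - f (X₀ ω)) ∂μ)) := by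
  set I : ℝ := ∫ ω, (f v₀ - f (X₀ ω)) ∂μ with hI
  set L : ℝ := lam * I with hLdef
  -- basic envelope facts for t > 0
  have ekey : ∀ (χ t : ℝ), 0 < t → ∀ v : ℝ, e χ t ≤ (χ - v) ^ 2 / (2 * t) + f v := by
    intro χ t ht v
    rcases eq_or_ne v (P χ t) with hv | hv
    · rw [he, hv]
    · rw [he]; exact (hP χ t ht v hv).le
  have ege : ∀ (χ t : ℝ), 0 < t → f v₀ ≤ e χ t := by
    intro χ t ht
    rw [he]
    have h1 : (0:ℝ) ≤ (χ - P χ t) ^ 2 / (2 * t) := by positivity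
    linarith [hv₀ (P χ t)]
  have ele : ∀ (χ t : ℝ), 0 < t → e χ t ≤ f χ := by
    intro χ t ht
    have := ekey χ t ht χ
    simpa using this
  -- convexity of χ ↦ e χ t, hence continuity, hence measurability
  have econt : ∀ t : ℝ, 0 < t → Continuous fun χ => e χ t := by
    intro t ht
    have hconv : ConvexOn ℝ univ fun χ => e χ t := by
      refine ⟨convex_univ, ?_⟩
      intro x _ y _ a b ha hb hab
      have hsq := ((Even.convexOn_pow (even_two : Even 2)).2 (mem_univ (x - P x t))
        (mem_univ (y - P y t)) ha hb hab)
      have hfc := hf.2 (mem_univ (P x t)) (mem_univ (P y t)) ha hb hab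
      have h1 := ekey (a • x + b • y) t ht (a • P x t + b • P y t)
      have h2 : ((a • x + b • y) - (a • P x t + b • P y t)) ^ 2
          ≤ a * (x - P x t) ^ 2 + b * (y - P y t) ^ 2 := by
        have : (a • x + b • y) - (a • P x t + b • P y t)
            = a • (x - P x t) + b • (y - P y t) := by
          simp [smul_eq_mul]; ring
        rw [this]
        simpa [smul_eq_mul] using hsq
      have h3 : ((a • x + b • y) - (a • P x t + b • P y t)) ^ 2 / (2 * t)
          ≤ (a * (x - P x t) ^ 2 + b * (y - P y t) ^ 2) / (2 * t) := by
        apply div_le_div_of_nonneg_right h2 (by linarith) |>.trans_eq rfl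
      calc e (a • x + b • y) t
          ≤ ((a • x + b • y) - (a • P x t + b • P y t)) ^ 2 / (2 * t)
            + f (a • P x t + b • P y t) := h1
        _ ≤ (a * (x - P x t) ^ 2 + b * (y - P y t) ^ 2) / (2 * t)
            + (a * f (P x t) + b * f (P y t)) := by
            refine add_le_add h3 ?_
            simpa [smul_eq_mul] using hfc
        _ = a • ((x - P x t) ^ 2 / (2 * t) + f (P x t))
            + b • ((y - P y t) ^ 2 / (2 * t) + f (P y t)) := by
            simp [smul_eq_mul]; ring
        _ = a • e x t + b • e y t := by rw [he x t, he y t]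
    have := hconv.continuousOn isOpen_univ
    rw [← continuousOn_univ]
    exact this
  -- integrability facts
  have hIint : Integrable (fun ω => f v₀ - f (X₀ ω)) μ := (integrable_const _).sub hfX₀
  have hInonpos : I ≤ 0 := by
    apply integral_nonpos
    intro ω; simp only [Pi.zero_apply]; linarith [hv₀ (X₀ ω)]
  have hLnonpos : L ≤ 0 := mul_nonpos_of_nonneg_of_nonpos hlam.le hInonpos
  have hsqint : Integrable (fun ω => (X₀ ω - v₀) ^ 2) μ := by
    have : (fun ω => (X₀ ω - v₀) ^ 2)
        = fun ω => (X₀ ω) ^ 2 - (2 * v₀) * X₀ ω + v₀ ^ 2 := by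
      funext ω; ring
    rw [this]
    have hX₀int : Integrable X₀ μ := by
      refine Integrable.mono' (hX₀sq.add (integrable_const 1)) hX₀meas.aestronglyMeasurable
        (ae_of_all _ fun ω => ?_)
      simp only [Pi.add_apply]
      rw [Real.norm_eq_abs]
      nlinarith [sq_abs (X₀ ω), sq_nonneg (|X₀ ω| - 1)]
    exact (hX₀sq.sub (hX₀int.const_mul _)).add (integrable_const _)
  set C : ℝ := ∫ ω, (X₀ ω - v₀) ^ 2 ∂μ with hC
  have hCnonneg : 0 ≤ C := integral_nonneg fun ω => sq_nonneg _
  have hgint : ∀ t : ℝ, 0 < t →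
      Integrable (fun ω => e (X₀ ω) t - f (X₀ ω)) μ := by
    intro t ht
    refine Integrable.mono (hfX₀.sub (integrable_const (f v₀)))
      ((((econt t ht).measurable.comp hX₀meas).aestronglyMeasurable).sub hfX₀.1)
      (ae_of_all _ fun ω => ?_)
    have h1 := ege (X₀ ω) t ht
    have h2 := ele (X₀ ω) t ht
    have h3 := hv₀ (X₀ ω)
    have habs : |e (X₀ ω) t - f (X₀ ω)| ≤ |f (X₀ ω) - f v₀| := by
      rw [abs_of_nonpos (by linarith), abs_of_nonneg (by linarith)]; linarith
    simpa [Real.norm_eq_abs, Pi.sub_apply] using habs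
  -- lower bound on each element, and upper bound by 0
  have hgIlb : ∀ t : ℝ, 0 < t → I ≤ ∫ ω, (e (X₀ ω) t - f (X₀ ω)) ∂μ := by
    intro t ht
    refine integral_mono hIint (hgint t ht) fun ω => ?_
    have := ege (X₀ ω) t ht
    simp only
    linarith
  have hgnonpos : ∀ t : ℝ, 0 < t → (∫ ω, (e (X₀ ω) t - f (X₀ ω)) ∂μ) ≤ 0 := by
    intro t ht
    apply integral_nonpos
    intro ω
    have := ele (X₀ ω) t ht
    simp only [Pi.zero_apply]
    linarith
  have hgub : ∀ t : ℝ, 0 < t →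
      (∫ ω, (e (X₀ ω) t - f (X₀ ω)) ∂μ) ≤ C / (2 * t) + I := by
    intro t ht
    have hmono : (∫ ω, (e (X₀ ω) t - f (X₀ ω)) ∂μ)
        ≤ ∫ ω, ((X₀ ω - v₀) ^ 2 * (1 / (2 * t)) + (f v₀ - f (X₀ ω))) ∂μ := by
      refine integral_mono (hgint t ht) ((hsqint.mul_const _).add hIint) fun ω => ?_
      have h1 := ekey (X₀ ω) t ht v₀
      simp only
      have : (X₀ ω - v₀) ^ 2 / (2 * t) = (X₀ ω - v₀) ^ 2 * (1 / (2 * t)) := by ring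
      nlinarith [h1]
    rw [integral_add (hsqint.mul_const _) hIint, integral_mul_const] at hmono
    calc (∫ ω, (e (X₀ ω) t - f (X₀ ω)) ∂μ) ≤ C * (1 / (2 * t)) + I := hmono
      _ = C / (2 * t) + I := by ring
  -- the sup set facts, for α > 0
  have hSbdd : ∀ α : ℝ, 0 < α → BddAbove ((fun τ =>
      -(α * τ) / 2 + lam * ∫ ω, (e (X₀ ω) (α * lam / τ) - f (X₀ ω)) ∂μ) '' Ioi (0 : ℝ)) := by
    intro α hα
    refine ⟨0, ?_⟩
    rintro x ⟨τ, hτ, rfl⟩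
    have hτ' : (0:ℝ) < τ := hτ
    have ht : 0 < α * lam / τ := by positivity
    have h1 := hgnonpos _ ht
    have h2 : -(α * τ) / 2 ≤ 0 := by
      have : 0 < α * τ := mul_pos hα hτ
      linarith
    nlinarith
  have hOlb : ∀ α : ℝ, 0 < α → L ≤ O α := by
    intro α hα
    rw [hOpos α hα]
    refine le_of_forall_pos_le_add fun ε hε => ?_
    have hτ : (0:ℝ) < 2 * ε / α := by positivity
    have ht : 0 < α * lam / (2 * ε / α) := by positivity
    have hmem : -(α * (2 * ε / α)) / 2
        + lam * ∫ ω, (e (X₀ ω) (α * lam / (2 * ε / α)) - f (X₀ ω)) ∂μ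
        ∈ ((fun τ => -(α * τ) / 2 + lam * ∫ ω, (e (X₀ ω) (α * lam / τ) - f (X₀ ω)) ∂μ)
          '' Ioi (0 : ℝ)) := ⟨2 * ε / α, hτ, rfl⟩
    have hle := le_csSup (hSbdd α hα) hmem
    have h1 := hgIlb _ ht
    have h2 : -(α * (2 * ε / α)) / 2 = -ε := by field_simp
    have h3 : lam * I ≤ lam * ∫ ω, (e (X₀ ω) (α * lam / (2 * ε / α)) - f (X₀ ω)) ∂μ :=
      mul_le_mul_of_nonneg_left h1 hlam.le
    rw [h2] at hle
    linarith
  have hOub : ∀ α : ℝ, 0 < α → C ≤ α ^ 2 → O α ≤ L := by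
    intro α hα hα2
    rw [hOpos α hα]
    refine csSup_le ⟨_, ⟨1, mem_Ioi.mpr one_pos, rfl⟩⟩ ?_
    rintro x ⟨τ, hτ, rfl⟩
    have hτ' : (0:ℝ) < τ := hτ
    have ht : 0 < α * lam / τ := by positivity
    have h1 := hgub _ ht
    have h2 : lam * (∫ ω, (e (X₀ ω) (α * lam / τ) - f (X₀ ω)) ∂μ)
        ≤ lam * (C / (2 * (α * lam / τ)) + I) := mul_le_mul_of_nonneg_left h1 hlam.le
    have h3 : lam * (C / (2 * (α * lam / τ)) + I) = C * τ / (2 * α) + L := by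
      field_simp
      ring
    rw [h3] at h2
    have h4 : C * τ / (2 * α) ≤ α * τ / 2 := by
      rw [div_le_div_iff₀ (by linarith) (by norm_num)]
      nlinarith
    linarith
  -- O is eventually equal to L
  set M : ℝ := max 1 (Real.sqrt C) with hM
  have hMpos : 0 < M := lt_of_lt_of_le one_pos (le_max_left _ _)
  have hOeq : ∀ α : ℝ, M ≤ α → O α = L := by
    intro α hα
    have hαpos : 0 < α := lt_of_lt_of_le hMpos hα
    have hsq : C ≤ α ^ 2 := by
      have h1 : Real.sqrt C ≤ α := le_trans (le_max_right _ _) hα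
      nlinarith [Real.sq_sqrt hCnonneg, Real.sqrt_nonneg C]
    exact le_antisymm (hOub α hαpos hsq) (hOlb α hαpos)
  constructor
  · apply le_antisymm
    · refine csInf_le ⟨L, ?_⟩ ⟨M, hMpos.le, hOeq M le_rfl⟩
      rintro x ⟨α, hα, rfl⟩
      rcases eq_or_lt_of_le (mem_Ici.mp hα) with h | h
      · rw [← h, hO0]; exact hLnonpos
      · exact hOlb α h
    · refine le_csInf ⟨O M, ⟨M, hMpos.le, rfl⟩⟩ ?_
      rintro x ⟨α, hα, rfl⟩
      rcases eq_or_lt_of_le (mem_Ici.mp hα) with h | h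
      · rw [← h, hO0]; exact hLnonpos
      · exact hOlb α h
  · have : ∀ᶠ α in atTop, O α = L := (eventually_ge_atTop M).mono hOeq
    exact Tendsto.congr' (this.mono fun α h => h.symm) tendsto_const_nhds
end
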